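/- arXiv:1502.07869 — 9 statements merged into one kernel-verified Lean document; each statement's English description precedes it below -/
import Mathlib

section
/- Suppose m ∈ ℕ and θ₁, …, θ_{2m−4} are 2m−4 distinct angles, each strictly between 0 and π. Suppose that for some m' with 3 ≤ m' < m there is a set P of m' points in the plane realising some subset of 2m'−4 of these angles that includes the maximum angle among θ₁, …, θ_{2m−4}. Then there is a set of m points in the plane realising all 2m−4 of the angles. -/
/-!
Let `∠ A B C = γ` be the largest angle, realised in `P`. The `2(m - m')` remaining angles all lie
in `(0, γ)`; pair them up as `α < β`. For each pair put a new point `D` on the ray from `B`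
making angle `β` with `BC`, hence `γ - β` with `BA`. As `D` runs along that ray the angle
`∠ B A D` varies continuously from `0` towards `π - (γ - β)`, so for a suitable `D` it equals
`π - α - (γ - β)`, and then the angle sum of triangle `A B D` gives `∠ A D B = α`. These
`m - m'` new points and enough arbitrary further ones give `m` points realising every angle.
-/

open EuclideanGeometry

/-- A set `P` of points realises the angle `θ` if some three points of `P`
form this angle. -/
def Realises {d : ℕ} (P : Set (EuclideanSpace ℝ (Fin d))) (θ : ℝ) : Prop :=
  ∃ A B C : EuclideanSpace ℝ (Fin d),
    A ∈ P ∧ B ∈ P ∧ C ∈ P ∧ A ≠ B ∧ C ≠ B ∧ EuclideanGeometry.angle A B C = θ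

/-- The ray from `B` towards `A`, encoded by its vertex together with the
unit vector in its direction. -/
noncomputable def rayOf {d : ℕ} (B A : EuclideanSpace ℝ (Fin d)) :
    EuclideanSpace ℝ (Fin d) × EuclideanSpace ℝ (Fin d) :=
  (B, ‖A - B‖⁻¹ • (A - B))

/-- A tuple `θ` of angles is realised with multiplicity by `P` if each `θ i` is
realised at some vertex `B i` by points `A i, C i` of `P`, with the unordered
pairs of rays pairwise distinct. -/
def RealisesMult {d n : ℕ} (P : Set (EuclideanSpace ℝ (Fin d))) (θ : Fin n → ℝ) : Prop :=
  ∃ A B C : Fin n → EuclideanSpace ℝ (Fin d),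
    (∀ i, A i ∈ P ∧ B i ∈ P ∧ C i ∈ P ∧ A i ≠ B i ∧ C i ≠ B i ∧
      EuclideanGeometry.angle (A i) (B i) (C i) = θ i) ∧
    Function.Injective fun i =>
      ({rayOf (B i) (A i), rayOf (B i) (C i)} :
        Set (EuclideanSpace ℝ (Fin d) × EuclideanSpace ℝ (Fin d)))

open InnerProductGeometry Real Finset

section Vectors

variable {V : Type*} [NormedAddCommGroup V] [InnerProductSpace ℝ V]

theorem exists_pos_angle_add_smul_eq {z w : V} (hz : z ≠ 0) (hw : w ≠ 0)
    (hwz : InnerProductGeometry.angle w z < π) {t : ℝ} (ht₀ : 0 < t)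
    (ht : t < InnerProductGeometry.angle w z) :
    ∃ s : ℝ, 0 < s ∧ InnerProductGeometry.angle (z + s • w) z = t := by
  -- Up to positive scaling, `(1 - u) • z + u • w` for `u ∈ [0, 1)` runs through `z + s • w`
  -- for `s ∈ [0, ∞)`, so the intermediate value theorem applies on a compact interval.
  set g : ℝ → ℝ := fun u => InnerProductGeometry.angle ((1 - u) • z + u • w) z
  have hne : ∀ u ∈ Set.Icc (0 : ℝ) 1, (1 - u) • z + u • w ≠ 0 := by
    intro u ⟨hu₀, hu₁⟩ h
    rcases hu₀.eq_or_lt with rfl | hu₀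
    · simp [hz] at h
    rcases hu₁.eq_or_lt with rfl | hu₁
    · simp [hw] at h
    refine hwz.ne (angle_eq_pi_iff.2 ⟨hw, -(u / (1 - u)), ?_, ?_⟩)
    · exact neg_neg_of_pos (div_pos hu₀ (sub_pos.2 hu₁))
    · rw [add_eq_zero_iff_eq_neg, ← neg_smul] at h
      rw [← inv_smul_smul₀ (sub_pos.2 hu₁).ne' z, h, smul_smul, mul_neg, div_eq_inv_mul]
  have hg : ContinuousOn g (Set.Icc 0 1) := fun u hu =>
    ((continuousAt_angle (x := ((1 - u) • z + u • w, z)) (hne u hu) hz).comp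
      (f := fun u : ℝ => ((1 - u) • z + u • w, z))
      (by fun_prop)).continuousWithinAt
  have hg₀ : g 0 = 0 := by simp [g, angle_self hz]
  have hg₁ : g 1 = InnerProductGeometry.angle w z := by simp [g]
  obtain ⟨u, ⟨hu₀, hu₁⟩, hgu⟩ := intermediate_value_Icc zero_le_one hg
    (show t ∈ Set.Icc (g 0) (g 1) by rw [hg₀, hg₁]; exact ⟨ht₀.le, ht.le⟩)
  have hu₀ : 0 < u := hu₀.lt_of_ne (by rintro rfl; linarith)
  have hu₁ : u < 1 := hu₁.lt_of_ne (by rintro rfl; linarith)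
  refine ⟨u / (1 - u), div_pos hu₀ (sub_pos.2 hu₁), ?_⟩
  have hscale : z + (u / (1 - u)) • w = (1 - u)⁻¹ • ((1 - u) • z + u • w) := by
    rw [smul_add, smul_smul, smul_smul, inv_mul_cancel₀ (sub_pos.2 hu₁).ne', one_smul,
      div_eq_inv_mul]
  rw [hscale, angle_smul_left_of_pos _ _ (inv_pos.2 (sub_pos.2 hu₁))]
  exact hgu

end Vectors

section Plane

attribute [local instance] FiniteDimensional.of_fact_finrank_eq_two

variable {V : Type*} [NormedAddCommGroup V] [InnerProductSpace ℝ V]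
  [Fact (Module.finrank ℝ V = 2)]

theorem exists_angle_eq_of_lt_angle {x y : V} (hx : x ≠ 0) (hy : y ≠ 0) {β : ℝ}
    (hβ₀ : 0 < β) (hβ : β < InnerProductGeometry.angle x y) :
    ∃ w : V, w ≠ 0 ∧ InnerProductGeometry.angle w y = β ∧
      InnerProductGeometry.angle x w = InnerProductGeometry.angle x y - β := by
  set γ := InnerProductGeometry.angle x y
  have hγ : γ ≤ π := angle_le_pi x y
  obtain ⟨o, ho⟩ : ∃ o : Orientation ℝ V (Fin 2), o.oangle x y = γ := by
    let o₀ := (Module.finBasisOfFinrankEq ℝ V (n := 2) Fact.out).orientation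
    rcases o₀.oangle_eq_angle_or_eq_neg_angle hx hy with h | h
    · exact ⟨o₀, h⟩
    · exact ⟨-o₀, by rw [Orientation.oangle_neg_orientation_eq_neg, h, neg_neg]⟩
  set w := o.rotation ((γ - β : ℝ) : Real.Angle) x
  have hw : w ≠ 0 := fun h => hx ((LinearIsometryEquiv.map_eq_zero_iff _).1 h)
  refine ⟨w, hw, ?_, ?_⟩
  · rw [o.angle_eq_abs_oangle_toReal hw hy, o.oangle_rotation_left hx hy, ho,
      ← Real.Angle.coe_sub, sub_sub_cancel,
      Real.Angle.toReal_coe_eq_self_iff.2 ⟨by linarith, by linarith⟩, abs_of_pos hβ₀]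
  · rw [o.angle_eq_abs_oangle_toReal hx hw, o.oangle_rotation_self_right hx,
      Real.Angle.toReal_coe_eq_self_iff.2 ⟨by linarith, by linarith⟩, abs_of_pos (by linarith)]

end Plane

section AffinePlane

variable {V P : Type*} [NormedAddCommGroup V] [InnerProductSpace ℝ V] [MetricSpace P]
  [NormedAddTorsor V P] [Fact (Module.finrank ℝ V = 2)]

theorem exists_angle_eq_angle_eq {A B C : P} (hAB : A ≠ B) (hCB : C ≠ B) {α β : ℝ}
    (hα : 0 < α) (hαβ : α < β) (hβ : β < ∠ A B C) (hπ : ∠ A B C < π) :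
    ∃ D : P, D ≠ B ∧ D ≠ A ∧ ∠ D B C = β ∧ ∠ A D B = α := by
  obtain ⟨w, hw, hwC, hAw⟩ :=
    exists_angle_eq_of_lt_angle (vsub_ne_zero.2 hAB) (vsub_ne_zero.2 hCB) (hα.trans hαβ) hβ
  rw [← EuclideanGeometry.angle] at hAw
  have hwA : InnerProductGeometry.angle w (B -ᵥ A) = π - (∠ A B C - β) := by
    rw [← neg_vsub_eq_vsub_rev, angle_neg_right, InnerProductGeometry.angle_comm, hAw]
  obtain ⟨s, hs, hsA⟩ := exists_pos_angle_add_smul_eq (vsub_ne_zero.2 hAB.symm) hw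
    (t := π - α - (∠ A B C - β)) (by linarith) (by linarith) (by linarith)
  set D := s • w +ᵥ B
  have hDB : D ≠ B := fun h => smul_ne_zero hs.ne' hw <| by
    rw [← vadd_vsub (s • w) B]
    exact vsub_eq_zero_iff_eq.2 h
  have hDBC : ∠ D B C = β := by
    rw [EuclideanGeometry.angle, vadd_vsub, angle_smul_left_of_pos _ _ hs, hwC]
  have hABD : ∠ A B D = ∠ A B C - β := by
    rw [EuclideanGeometry.angle, vadd_vsub, angle_smul_right_of_pos _ _ hs, hAw]
  have hDA : D ≠ A := by
    rintro h
    rw [h, angle_self_of_ne hAB] at hABD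
    linarith
  have hDAB : ∠ D A B = π - α - (∠ A B C - β) := by
    rw [EuclideanGeometry.angle, vadd_vsub_assoc, add_comm, hsA]
  refine ⟨D, hDB, hDA, hDBC, ?_⟩
  have hsum := angle_add_angle_add_angle_eq_pi B hDA.symm
  rw [angle_comm B D A] at hsum
  linarith

end AffinePlane

theorem Realises.mono {d : ℕ} {P Q : Set (EuclideanSpace ℝ (Fin d))} (hPQ : P ⊆ Q) {θ : ℝ}
    (h : Realises P θ) : Realises Q θ := by
  obtain ⟨A, B, C, hA, hB, hC, hAB, hCB, hABC⟩ := h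
  exact ⟨A, B, C, hPQ hA, hPQ hB, hPQ hC, hAB, hCB, hABC⟩

instance : Fact (Module.finrank ℝ (EuclideanSpace ℝ (Fin 2)) = 2) :=
  ⟨finrank_euclideanSpace_fin⟩

theorem exists_superset_realises_of_lt_angle {A B C : EuclideanSpace ℝ (Fin 2)} (hAB : A ≠ B)
    (hCB : C ≠ B) (hπ : ∠ A B C < π) (k : ℕ) (S : Finset ℝ) (hS : S.card = 2 * k)
    (hSmem : ∀ x ∈ S, 0 < x ∧ x < ∠ A B C) (R : Finset (EuclideanSpace ℝ (Fin 2)))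
    (hA : A ∈ R) (hB : B ∈ R) (hC : C ∈ R) :
    ∃ R' : Finset (EuclideanSpace ℝ (Fin 2)), R ⊆ R' ∧ R'.card ≤ R.card + k ∧
      ∀ x ∈ S, Realises (R' : Set (EuclideanSpace ℝ (Fin 2))) x := by
  induction k generalizing S R with
  | zero => exact ⟨R, subset_rfl, by simp, by simp [card_eq_zero.1 hS]⟩
  | succ k ih =>
    have hne : S.Nonempty := card_pos.1 (by omega)
    set a := S.min' hne
    set b := S.max' hne
    have hab : a < b := min'_lt_max'_of_card S (by omega)
    obtain ⟨D, hDB, hDA, hDBC, hADB⟩ :=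
      exists_angle_eq_angle_eq hAB hCB (hSmem a (min'_mem S hne)).1 hab
        (hSmem b (max'_mem S hne)).2 hπ
    have haS : a ∈ S.erase b := mem_erase.2 ⟨hab.ne, min'_mem S hne⟩
    obtain ⟨R', hRR', hR'card, hR'⟩ := ih ((S.erase b).erase a)
      (by rw [card_erase_of_mem haS, card_erase_of_mem (max'_mem S hne)]; omega)
      (fun x hx => hSmem x (mem_of_mem_erase (mem_of_mem_erase hx))) (insert D R)
      (mem_insert_of_mem hA) (mem_insert_of_mem hB) (mem_insert_of_mem hC)
    have hR := (subset_insert D R).trans hRR'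
    have hD : D ∈ R' := hRR' (mem_insert_self D R)
    refine ⟨R', hR, by have := card_insert_le D R; omega, fun x hx => ?_⟩
    by_cases hxa : x = a
    · exact hxa ▸ ⟨A, D, B, hR hA, hD, hR hB, hDA.symm, hDB.symm, hADB⟩
    by_cases hxb : x = b
    · exact hxb ▸ ⟨D, B, C, hD, hR hB, hR hC, hDB, hCB, hDBC⟩
    exact hR' x (mem_erase.2 ⟨hxa, mem_erase.2 ⟨hxb, hx⟩⟩)

/-- if `2m'-4` of the `2m-4` distinct angles, including the maximum
one, are realised by `m'` points in the plane (`3 ≤ m' < m`), then all `2m-4`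
angles can be realised by `m` points in the plane. -/
theorem statement3 (m : ℕ) (θ : Fin (2 * m - 4) → ℝ)
    (hinj : Function.Injective θ)
    (hθ : ∀ i, θ i ∈ Set.Ioo 0 Real.pi)
    (m' : ℕ) (hm'3 : 3 ≤ m') (hm' : m' < m)
    (P : Finset (EuclideanSpace ℝ (Fin 2))) (hP : P.card = m')
    (I : Finset (Fin (2 * m - 4))) (hI : I.card = 2 * m' - 4)
    (hreal : ∀ i ∈ I, Realises (P : Set (EuclideanSpace ℝ (Fin 2))) (θ i))
    (hmax : ∃ i₀ ∈ I, ∀ j, θ j ≤ θ i₀) :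
    ∃ Q : Finset (EuclideanSpace ℝ (Fin 2)), Q.card = m ∧
      ∀ i, Realises (Q : Set (EuclideanSpace ℝ (Fin 2))) (θ i) := by
  obtain ⟨i₀, hi₀, hi₀max⟩ := hmax
  obtain ⟨A, B, C, hA, hB, hC, hAB, hCB, hABC⟩ := hreal i₀ hi₀
  have hS : (Iᶜ.image θ).card = 2 * (m - m') := by
    rw [card_image_of_injective _ hinj, card_compl, Fintype.card_fin, hI]
    omega
  have hSmem : ∀ x ∈ Iᶜ.image θ, 0 < x ∧ x < ∠ A B C := by
    simp only [mem_image, mem_compl]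
    rintro _ ⟨j, hj, rfl⟩
    exact ⟨(hθ j).1, hABC ▸ (hi₀max j).lt_of_ne (hinj.ne (by rintro rfl; exact hj hi₀))⟩
  obtain ⟨R, hPR, hRcard, hR⟩ := exists_superset_realises_of_lt_angle hAB hCB
    (hABC ▸ (hθ i₀).2) (m - m') _ hS hSmem P hA hB hC
  obtain ⟨Q, hRQ, hQ⟩ := Infinite.exists_superset_card_eq R m (by omega)
  refine ⟨Q, hQ, fun i => ?_⟩
  by_cases hi : i ∈ I
  · exact (hreal i hi).mono (coe_subset.2 (hPR.trans hRQ))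
  · exact (hR _ (mem_image_of_mem θ (mem_compl.2 hi))).mono (coe_subset.2 hRQ)
end

section
/- Let θ₁, θ₂, …, θ₆ be six distinct angles, each strictly between 0 and π. Then there is a set of five points in the plane realising all six of these angles. -/
open EuclideanGeometry

section AnglesProof

open Real



local notation "E2" => EuclideanSpace ℝ (Fin 2)

noncomputable def dv (t : ℝ) : E2 := WithLp.toLp 2 ![Real.cos t, Real.sin t]

lemma dv_apply0 (t : ℝ) : dv t 0 = Real.cos t := rfl
lemma dv_apply1 (t : ℝ) : dv t 1 = Real.sin t := rfl

lemma norm_dv (t : ℝ) : ‖dv t‖ = 1 := by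
  rw [EuclideanSpace.norm_eq]
  simp [Fin.sum_univ_two, dv_apply0, dv_apply1]

lemma inner_dv (a b : ℝ) : (inner ℝ (dv a) (dv b) : ℝ) = Real.cos (a - b) := by
  rw [PiLp.inner_apply]
  simp [Fin.sum_univ_two, dv_apply0, dv_apply1, Real.cos_sub]
  ring

lemma dv_ne_zero (t : ℝ) : dv t ≠ 0 := by
  intro h
  have := norm_dv t
  rw [h] at this
  simp at this

lemma angle_core {P Q R : E2} {r s a b : ℝ} (hr : 0 < r) (hs : 0 < s)
    (h1 : P - Q = r • dv a) (h2 : R - Q = s • dv b) :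
    EuclideanGeometry.angle P Q R = Real.arccos (Real.cos (a - b)) := by
  rw [EuclideanGeometry.angle, show P -ᵥ Q = P - Q from rfl, show R -ᵥ Q = R - Q from rfl,
    h1, h2, InnerProductGeometry.angle_smul_left_of_pos _ _ hr,
    InnerProductGeometry.angle_smul_right_of_pos _ _ hs, InnerProductGeometry.angle,
    inner_dv, norm_dv, norm_dv]
  norm_num

lemma vec_eq_of_components {x y : E2} (h0 : x 0 = y 0) (h1 : x 1 = y 1) : x = y := by
  ext i
  fin_cases i
  · exact h0
  · exact h1

lemma tri {X Y : E2} {L δ : ℝ} (hXY : Y - X = L • dv δ) (hL : 0 < L)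
    {u v : ℝ} (hu : 0 < u) (hv : 0 < v) (huv : u + v < π) :
    ∃ Z : E2, ∃ r s : ℝ, 0 < r ∧ 0 < s ∧ Z - X = r • dv (δ + u) ∧
      Z - Y = s • dv (δ + π - v) := by
  have hvπ : v < π := by linarith
  have hsu : 0 < Real.sin u := Real.sin_pos_of_pos_of_lt_pi hu (by linarith)
  have hsv : 0 < Real.sin v := Real.sin_pos_of_pos_of_lt_pi hv hvπ
  have hsuv : 0 < Real.sin (u + v) := Real.sin_pos_of_pos_of_lt_pi (by linarith) huv
  refine ⟨X + (L * Real.sin v / Real.sin (u + v)) • dv (δ + u),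
    L * Real.sin v / Real.sin (u + v), L * Real.sin u / Real.sin (u + v),
    by positivity, by positivity, by abel, ?_⟩
  have hY : Y = X + L • dv δ := by
    have := hXY
    rw [sub_eq_iff_eq_add] at this
    rw [this]; abel
  rw [hY]
  apply vec_eq_of_components
  · simp only [PiLp.sub_apply, PiLp.add_apply, PiLp.smul_apply, smul_eq_mul, dv_apply0]
    field_simp
    rw [show δ + π - v = (δ - v) + π from by ring]
    simp [Real.cos_add, Real.sin_add, Real.cos_sub, Real.sin_sub]
    ring
  · simp only [PiLp.sub_apply, PiLp.add_apply, PiLp.smul_apply, smul_eq_mul, dv_apply1]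
    field_simp
    rw [show δ + π - v = (δ - v) + π from by ring]
    simp [Real.cos_add, Real.sin_add, Real.cos_sub, Real.sin_sub]
    ring

lemma polar_neg {P Q : E2} {r a : ℝ} (h : P - Q = r • dv a) : Q - P = r • dv (a + π) := by
  have h2 : Q - P = -(P - Q) := by abel
  rw [h2, h]
  apply vec_eq_of_components
  · simp [PiLp.neg_apply, PiLp.smul_apply, dv_apply0, Real.cos_add]
  · simp [PiLp.neg_apply, PiLp.smul_apply, dv_apply1, Real.sin_add]

lemma polar_ne {P Q : E2} {r a : ℝ} (hr : 0 < r) (h : P - Q = r • dv a) : P ≠ Q := by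
  intro he
  rw [he, sub_self] at h
  rcases smul_eq_zero.mp h.symm with h' | h'
  · exact absurd h' (ne_of_gt hr)
  · exact dv_ne_zero a h'

instance : Infinite E2 := by
  apply Infinite.of_injective (fun r : ℝ => r • dv 0)
  intro x y h
  have h0 := congrArg (fun v : E2 => v 0) h
  simpa [PiLp.smul_apply, dv_apply0] using h0


lemma realises_slot {S : Set (EuclideanSpace ℝ (Fin 2))} {P Q R : E2} {r s a b t : ℝ}
    (hP : P ∈ S) (hQ : Q ∈ S) (hR : R ∈ S)
    (hr : 0 < r) (hs : 0 < s) (h1 : P - Q = r • dv a) (h2 : R - Q = s • dv b)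
    (ht0 : 0 ≤ t) (htπ : t ≤ π) (hc : Real.cos (a - b) = Real.cos t) :
    Realises S t := by
  refine ⟨P, Q, R, hP, hQ, hR, polar_ne hr h1, polar_ne hs h2, ?_⟩
  rw [angle_core hr hs h1 h2, hc, Real.arccos_cos ht0 htπ]

lemma constructK (t1 t2 t3 t4 t5 t6 : ℝ)
    (h01 : 0 < t1) (h12 : t1 < t2) (h23 : t2 < t3) (h34 : t3 < t4) (h45 : t4 < t5)
    (h56 : t5 < t6) (h6π : t6 < π) (hK : π + t1 < t2 + t6) :
    ∃ S : Finset (EuclideanSpace ℝ (Fin 2)), S.card ≤ 5 ∧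
      Realises (S : Set (EuclideanSpace ℝ (Fin 2))) t1 ∧ Realises (S : Set (EuclideanSpace ℝ (Fin 2))) t2 ∧ Realises (S : Set (EuclideanSpace ℝ (Fin 2))) t3 ∧ Realises (S : Set (EuclideanSpace ℝ (Fin 2))) t4 ∧ Realises (S : Set (EuclideanSpace ℝ (Fin 2))) t5 ∧ Realises (S : Set (EuclideanSpace ℝ (Fin 2))) t6 := by
  classical
  set A : E2 := 0 with hAdef
  set B : E2 := dv 0 with hBdef
  have hBA : B - A = (1 : ℝ) • dv 0 := by rw [hAdef, sub_zero, one_smul]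
  have hAB : A - B = (1 : ℝ) • dv (0 + π) := polar_neg hBA
  obtain ⟨C, rC, sC, hrC, hsC, hCA, hCB⟩ :=
    tri hBA one_pos (u := π - t4 + t5 - t6) (v := t4)
      (by linarith) (by linarith) (by linarith)
  obtain ⟨E, rE, sE, hrE, hsE, hEB, hEC⟩ :=
    tri hCB hsC (u := t4 - t3) (v := t2 + t6 - t5)
      (by linarith) (by linarith) (by linarith)
  have hCE := polar_neg hEC
  obtain ⟨D, rD, sD, hrD, hsD, hDE, hDC⟩ :=
    tri hCE hsE (u := t1) (v := 2 * π - t2 - t6)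
      (by linarith) (by linarith) (by linarith)
  have hAC := polar_neg hCA
  have hBC := polar_neg hCB
  refine ⟨{A, B, C, E, D}, ?_, ?_, ?_, ?_, ?_, ?_, ?_⟩
  · refine (Finset.card_insert_le _ _).trans (Nat.succ_le_succ ?_)
    refine (Finset.card_insert_le _ _).trans (Nat.succ_le_succ ?_)
    refine (Finset.card_insert_le _ _).trans (Nat.succ_le_succ ?_)
    refine (Finset.card_insert_le _ _).trans (Nat.succ_le_succ ?_)
    simp
  · -- t1 = angle C E D
    refine realises_slot (by simp) (by simp) (by simp) hsE hrD hCE hDE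
      (by linarith) (by linarith) ?_
    rw [show (0 + π - t4 + π - (t2 + t6 - t5) + π) -
      (0 + π - t4 + π - (t2 + t6 - t5) + π + t1) = -t1 by ring, Real.cos_neg]
  · -- t2 = angle A C E
    refine realises_slot (by simp) (by simp) (by simp) hrC hsE hAC hEC
      (by linarith) (by linarith) ?_
    rw [show (0 + (π - t4 + t5 - t6) + π) - (0 + π - t4 + π - (t2 + t6 - t5)) = t2 by ring]
  · -- t3 = angle A B E
    refine realises_slot (by simp) (by simp) (by simp) one_pos hrE hAB hEB
      (by linarith) (by linarith) ?_
    rw [show (0 + π) - (0 + π - t4 + (t4 - t3)) = t3 by ring]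
  · -- t4 = angle A B C
    refine realises_slot (by simp) (by simp) (by simp) one_pos hsC hAB hCB
      (by linarith) (by linarith) ?_
    rw [show (0 + π) - (0 + π - t4) = t4 by ring]
  · -- t5 = angle B C D
    refine realises_slot (by simp) (by simp) (by simp) hsC hsD hBC hDC
      (by linarith) (by linarith) ?_
    rw [show (0 + π - t4 + π) -
      (0 + π - t4 + π - (t2 + t6 - t5) + π + π - (2 * π - t2 - t6)) = -t5 by ring, Real.cos_neg]
  · -- t6 = angle A C D
    refine realises_slot (by simp) (by simp) (by simp) hrC hsD hAC hDC
      (by linarith) (by linarith) ?_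
    rw [show (0 + (π - t4 + t5 - t6) + π) -
      (0 + π - t4 + π - (t2 + t6 - t5) + π + π - (2 * π - t2 - t6)) = -t6 by ring, Real.cos_neg]

lemma constructZ (t1 t2 t3 t4 t5 t6 : ℝ)
    (h01 : 0 < t1) (h12 : t1 < t2) (h23 : t2 < t3) (h34 : t3 < t4) (h45 : t4 < t5)
    (h56 : t5 < t6) (h6π : t6 < π) (hZ : t2 + t6 ≤ π + t1) :
    ∃ S : Finset (EuclideanSpace ℝ (Fin 2)), S.card ≤ 5 ∧
      Realises (S : Set (EuclideanSpace ℝ (Fin 2))) t1 ∧ Realises (S : Set (EuclideanSpace ℝ (Fin 2))) t2 ∧ Realises (S : Set (EuclideanSpace ℝ (Fin 2))) t3 ∧ Realises (S : Set (EuclideanSpace ℝ (Fin 2))) t4 ∧ Realises (S : Set (EuclideanSpace ℝ (Fin 2))) t5 ∧ Realises (S : Set (EuclideanSpace ℝ (Fin 2))) t6 := by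
  classical
  set A : E2 := 0 with hAdef
  set B : E2 := dv 0 with hBdef
  have hBA : B - A = (1 : ℝ) • dv 0 := by rw [hAdef, sub_zero, one_smul]
  have hAB : A - B = (1 : ℝ) • dv (0 + π) := polar_neg hBA
  obtain ⟨C, rC, sC, hrC, hsC, hCA, hCB⟩ :=
    tri hBA one_pos (u := π - t5 + t1 - t2) (v := t5)
      (by linarith) (by linarith) (by linarith)
  obtain ⟨E, rE, sE, hrE, hsE, hEB, hEC⟩ :=
    tri hCB hsC (u := t5 - t4) (v := t2 + t3 - t1)
      (by linarith) (by linarith) (by linarith)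
  have hBC := polar_neg hCB
  obtain ⟨D, rD, sD, hrD, hsD, hDC, hDB⟩ :=
    tri hBC hsC (u := t1) (v := t6 - t5)
      (by linarith) (by linarith) (by linarith)
  have hAC := polar_neg hCA
  refine ⟨{A, B, C, E, D}, ?_, ?_, ?_, ?_, ?_, ?_, ?_⟩
  · refine (Finset.card_insert_le _ _).trans (Nat.succ_le_succ ?_)
    refine (Finset.card_insert_le _ _).trans (Nat.succ_le_succ ?_)
    refine (Finset.card_insert_le _ _).trans (Nat.succ_le_succ ?_)
    refine (Finset.card_insert_le _ _).trans (Nat.succ_le_succ ?_)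
    simp
  · -- t1 = angle B C D
    refine realises_slot (by simp) (by simp) (by simp) hsC hrD hBC hDC
      (by linarith) (by linarith) ?_
    rw [show (0 + π - t5 + π) - (0 + π - t5 + π + t1) = -t1 by ring, Real.cos_neg]
  · -- t2 = angle A C D
    refine realises_slot (by simp) (by simp) (by simp) hrC hrD hAC hDC
      (by linarith) (by linarith) ?_
    rw [show (0 + (π - t5 + t1 - t2) + π) - (0 + π - t5 + π + t1) = -t2 by ring, Real.cos_neg]
  · -- t3 = angle A C E
    refine realises_slot (by simp) (by simp) (by simp) hrC hsE hAC hEC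
      (by linarith) (by linarith) ?_
    rw [show (0 + (π - t5 + t1 - t2) + π) - (0 + π - t5 + π - (t2 + t3 - t1)) = t3 by ring]
  · -- t4 = angle A B E
    refine realises_slot (by simp) (by simp) (by simp) one_pos hrE hAB hEB
      (by linarith) (by linarith) ?_
    rw [show (0 + π) - (0 + π - t5 + (t5 - t4)) = t4 by ring]
  · -- t5 = angle A B C
    refine realises_slot (by simp) (by simp) (by simp) one_pos hsC hAB hCB
      (by linarith) (by linarith) ?_
    rw [show (0 + π) - (0 + π - t5) = t5 by ring]
  · -- t6 = angle A B D
    refine realises_slot (by simp) (by simp) (by simp) one_pos hsD hAB hDB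
      (by linarith) (by linarith) ?_
    rw [show (0 + π) - (0 + π - t5 + π + π - (t6 - t5)) = t6 - 2 * π by ring,
      Real.cos_sub_two_pi]

lemma key (g : Fin 6 → ℝ) (hs : StrictMono g) (hall : ∀ i, g i ∈ Set.Ioo 0 π) :
    ∃ S : Finset (EuclideanSpace ℝ (Fin 2)), S.card = 5 ∧
      ∀ j, Realises (S : Set (EuclideanSpace ℝ (Fin 2))) (g j) := by
  classical
  have h01 : (0 : ℝ) < g 0 := (hall 0).1
  have h6π : g 5 < π := (hall 5).2
  have h12 : g 0 < g 1 := hs (show (0 : Fin 6) < 1 by decide)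
  have h23 : g 1 < g 2 := hs (show (1 : Fin 6) < 2 by decide)
  have h34 : g 2 < g 3 := hs (show (2 : Fin 6) < 3 by decide)
  have h45 : g 3 < g 4 := hs (show (3 : Fin 6) < 4 by decide)
  have h56 : g 4 < g 5 := hs (show (4 : Fin 6) < 5 by decide)
  have main : ∃ S : Finset (EuclideanSpace ℝ (Fin 2)), S.card ≤ 5 ∧
      Realises (S : Set (EuclideanSpace ℝ (Fin 2))) (g 0) ∧
      Realises (S : Set (EuclideanSpace ℝ (Fin 2))) (g 1) ∧
      Realises (S : Set (EuclideanSpace ℝ (Fin 2))) (g 2) ∧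
      Realises (S : Set (EuclideanSpace ℝ (Fin 2))) (g 3) ∧
      Realises (S : Set (EuclideanSpace ℝ (Fin 2))) (g 4) ∧
      Realises (S : Set (EuclideanSpace ℝ (Fin 2))) (g 5) := by
    rcases lt_or_ge (π + g 0) (g 1 + g 5) with hK | hZ
    · exact constructK (g 0) (g 1) (g 2) (g 3) (g 4) (g 5)
        h01 h12 h23 h34 h45 h56 h6π hK
    · obtain ⟨S, hc, H1, H2, H3, H4, H5, H6⟩ := constructZ (g 0) (g 1) (g 2) (g 3) (g 4) (g 5)
        h01 h12 h23 h34 h45 h56 h6π (by linarith)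
      exact ⟨S, hc, H1, H2, H3, H4, H5, H6⟩
  obtain ⟨S, hcard, H1, H2, H3, H4, H5, H6⟩ := main
  obtain ⟨T, hsub, hT⟩ := Infinite.exists_superset_card_eq S 5 hcard
  have mono : ∀ x, Realises (S : Set (EuclideanSpace ℝ (Fin 2))) x →
      Realises (T : Set (EuclideanSpace ℝ (Fin 2))) x := by
    rintro x ⟨P, Q, R, hP, hQ, hR, hne1, hne2, hang⟩
    exact ⟨P, Q, R, Finset.coe_subset.mpr hsub hP, Finset.coe_subset.mpr hsub hQ,
      Finset.coe_subset.mpr hsub hR, hne1, hne2, hang⟩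
  refine ⟨T, hT, ?_⟩
  intro j
  fin_cases j
  · exact mono _ H1
  · exact mono _ H2
  · exact mono _ H3
  · exact mono _ H4
  · exact mono _ H5
  · exact mono _ H6

/-- any six distinct angles in `(0, π)` can be realised by five
points in the plane. -/
theorem statement4 (θ : Fin 6 → ℝ) (hinj : Function.Injective θ)
    (hθ : ∀ i, θ i ∈ Set.Ioo 0 Real.pi) :
    ∃ P : Finset (EuclideanSpace ℝ (Fin 2)), P.card = 5 ∧
      ∀ i, Realises (P : Set (EuclideanSpace ℝ (Fin 2))) (θ i) := by
  classical
  set σ := Tuple.sort θ with hσ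
  have hmono : Monotone (θ ∘ σ) := Tuple.monotone_sort θ
  have hsm : StrictMono (θ ∘ σ) :=
    hmono.strictMono_of_injective (hinj.comp σ.injective)
  obtain ⟨S, hcard, hall⟩ := key (θ ∘ σ) hsm (fun i => hθ (σ i))
  refine ⟨S, hcard, fun i => ?_⟩
  have h := hall (σ.symm i)
  simpa using h

end AnglesProof
end

section
/- Let θ be any angle strictly between 0 and π and let t ≥ 2 be a natural number. Then there is a set of 2t points in the plane realising the angle θ with multiplicity t(t−1); that is, the constant tuple consisting of t(t−1) copies of θ is realised with multiplicity by a set of 2t points in the plane. -/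
open EuclideanGeometry

/-!
Place `2t` points on the unit circle at the parameters `a i = i ε` and `b i = i ε + 2θ`
(`i < t`), where `t ε ≤ min θ (π - θ)`. By the inscribed angle theorem the chord from `a i` to
`b i` subtends the angle `θ` at every point of the circle off the arc `[a i, b i]`, in particular
at the `t - 1` points `a j` (`j < i`) and `b j` (`j > i`). A ray starting on a circle meets it in
at most one further point, so the pair of rays determines both the vertex and the chord, and the
`t (t - 1)` ray pairs are distinct.
-/

open Real

namespace Complex

lemma exp_mul_I_sub_exp_mul_I (x v : ℝ) :
    exp (x * I) - exp (v * I) =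
      (2 * Real.sin ((x - v) / 2) : ℝ) * (I * exp (↑((x + v) / 2) * I)) := by
  have hx : (x : ℂ) * I = ↑((x + v) / 2) * I + ↑((x - v) / 2) * I := by push_cast; ring
  have hv : (v : ℂ) * I = ↑((x + v) / 2) * I - ↑((x - v) / 2) * I := by push_cast; ring
  rw [hx, hv, exp_add, exp_sub, ofReal_mul, ofReal_sin, Complex.sin, neg_mul, exp_neg,
    ofReal_ofNat]
  generalize exp (↑((x + v) / 2) * I) = E
  have hF := exp_ne_zero (↑((x - v) / 2) * I)
  generalize exp (↑((x - v) / 2) * I) = F at hF ⊢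
  field_simp
  linear_combination (E * F ^ 2 - E) * I_sq

lemma angle_exp_mul_I_eq_half_sub {v x y : ℝ} (hvx : v < x) (hxy : x ≤ y)
    (hyv : y < v + 2 * π) :
    ∠ (exp (x * I)) (exp (v * I)) (exp (y * I)) = (y - x) / 2 := by
  have hsin (z : ℝ) (h₁ : v < z) (h₂ : z < v + 2 * π) : 0 < 2 * Real.sin ((z - v) / 2) :=
    mul_pos two_pos (Real.sin_pos_of_pos_of_lt_pi (by linarith) (by linarith))
  rw [EuclideanGeometry.angle, vsub_eq_sub, vsub_eq_sub, exp_mul_I_sub_exp_mul_I,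
    exp_mul_I_sub_exp_mul_I, ← real_smul (x := 2 * Real.sin ((x - v) / 2)),
    ← real_smul (x := 2 * Real.sin ((y - v) / 2)),
    InnerProductGeometry.angle_smul_left_of_pos _ _ (hsin x hvx (by linarith)),
    InnerProductGeometry.angle_smul_right_of_pos _ _ (hsin y (by linarith) hyv),
    angle_mul_left I_ne_zero, angle_exp_exp, (toIocMod_eq_self _).2]
  · rw [abs_of_nonpos (by linarith)]
    ring
  · constructor <;> linarith

end Complex

noncomputable def unitCirclePt (a : ℝ) : EuclideanSpace ℝ (Fin 2) :=
  Complex.orthonormalBasisOneI.repr (Circle.exp a)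

lemma unitCirclePt_mem_sphere (a : ℝ) :
    unitCirclePt a ∈ (⟨0, 1⟩ : Sphere (EuclideanSpace ℝ (Fin 2))) := by
  simp [EuclideanGeometry.mem_sphere, unitCirclePt]

lemma unitCirclePt_sub_two_pi (a : ℝ) : unitCirclePt (a - 2 * π) = unitCirclePt a := by
  rw [unitCirclePt, Circle.exp_sub_two_pi, unitCirclePt]

lemma unitCirclePt_injOn_Ico : Set.InjOn unitCirclePt (Set.Ico 0 (2 * π)) := fun _ ha _ hb h =>
  Circle.exp_injOn_Ico (by simp) ha hb
    (Circle.coe_injective (Complex.orthonormalBasisOneI.repr.injective h))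

lemma angle_unitCirclePt_eq_half_sub {v x y : ℝ} (hvx : v < x) (hxy : x ≤ y)
    (hyv : y < v + 2 * π) :
    ∠ (unitCirclePt x) (unitCirclePt v) (unitCirclePt y) = (y - x) / 2 :=
  (Complex.orthonormalBasisOneI.repr.toLinearIsometry.toAffineIsometry.angle_map _ _ _).trans
    (Complex.angle_exp_mul_I_eq_half_sub hvx hxy hyv)

lemma rayOf_injOn_sphere_diff {d : ℕ} {s : Sphere (EuclideanSpace ℝ (Fin d))}
    {V : EuclideanSpace ℝ (Fin d)} (hV : V ∈ s) : Set.InjOn (rayOf V) ((s : Set _) \ {V}) := by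
  rintro X ⟨hX, hXV⟩ Y ⟨hY, hYV⟩ h
  set u := ‖X - V‖⁻¹ • (X - V)
  have hline (Z : EuclideanSpace ℝ (Fin d)) (hZ : Z ∈ s) (hZV : Z ≠ V)
      (hZu : rayOf V Z = (V, u)) : Z = s.secondInter V u := by
    refine ((s.eq_or_eq_secondInter_of_mem_mk'_span_singleton_iff_mem hV ?_).2 hZ).resolve_left
      hZV
    rw [AffineSubspace.mem_mk', Submodule.mem_span_singleton, vsub_eq_sub]
    have hu : ‖Z - V‖⁻¹ • (Z - V) = u := congrArg Prod.snd hZu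
    refine ⟨‖Z - V‖, ?_⟩
    rw [← hu, smul_smul, mul_inv_cancel₀ (norm_ne_zero_iff.2 (sub_ne_zero.2 hZV)), one_smul]
  rw [hline X hX hXV rfl, hline Y hY hYV h.symm]

lemma eq_and_eq_or_eq_of_rayOf_mem_pair {d : ℕ} {s : Sphere (EuclideanSpace ℝ (Fin d))}
    {V X V' X' Y' : EuclideanSpace ℝ (Fin d)} (hV : V ∈ s) (hX : X ∈ s) (hX' : X' ∈ s)
    (hY' : Y' ∈ s) (hXV : X ≠ V) (hX'V' : X' ≠ V') (hY'V' : Y' ≠ V')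
    (h : rayOf V X ∈ ({rayOf V' X', rayOf V' Y'} : Set _)) : V = V' ∧ (X = X' ∨ X = Y') := by
  have hVV' : V = V' := by obtain h | h := h <;> exact congrArg Prod.fst h
  subst hVV'
  exact ⟨rfl, h.imp (rayOf_injOn_sphere_diff hV ⟨hX, hXV⟩ ⟨hX', hX'V'⟩)
    (rayOf_injOn_sphere_diff hV ⟨hX, hXV⟩ ⟨hY', hY'V'⟩)⟩

lemma realisesMult_const_of_card_eq {d n : ℕ} {ι : Type*} [Fintype ι] (hι : Fintype.card ι = n)
    {P : Set (EuclideanSpace ℝ (Fin d))} {θ : ℝ} (A B C : ι → EuclideanSpace ℝ (Fin d))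
    (h : ∀ i, A i ∈ P ∧ B i ∈ P ∧ C i ∈ P ∧ A i ≠ B i ∧ C i ≠ B i ∧ ∠ (A i) (B i) (C i) = θ)
    (hinj : Function.Injective fun i =>
      ({rayOf (B i) (A i), rayOf (B i) (C i)} :
        Set (EuclideanSpace ℝ (Fin d) × EuclideanSpace ℝ (Fin d)))) :
    RealisesMult P (fun _ : Fin n => θ) :=
  let e := (Fintype.equivFinOfCardEq hι).symm
  ⟨A ∘ e, B ∘ e, C ∘ e, fun i => h (e i), hinj.comp e.injective⟩

section Chords

variable (θ ε : ℝ) {t : ℕ}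

noncomputable def chordParam (q : Fin 2 × Fin t) : ℝ := 2 * θ * q.1 + ε * q.2

noncomputable def chordPoint (q : Fin 2 × Fin t) : EuclideanSpace ℝ (Fin 2) :=
  unitCirclePt (chordParam θ ε q)

def chordVertex (p : Fin t × Fin t) : Fin 2 × Fin t := (if p.2 < p.1 then 0 else 1, p.2)

variable {θ ε} (hε : 0 < ε) (hθ : ε * t ≤ θ) (hπ : ε * t ≤ π - θ)
include hε hθ hπ

lemma chordParam_mem_Ico (q : Fin 2 × Fin t) : chordParam θ ε q ∈ Set.Ico 0 (2 * π) := by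
  have hθ0 : 0 ≤ θ := (by positivity : 0 ≤ ε * t).trans hθ
  have hk : ((q.1 : ℕ) : ℝ) ≤ 1 := by exact_mod_cast Nat.lt_succ_iff.1 q.1.2
  have hi : ε * q.2 < ε * t := by gcongr; exact_mod_cast q.2.2
  rw [chordParam]
  constructor
  · positivity
  · nlinarith

omit hπ in
lemma chordParam_injective : Function.Injective (chordParam θ ε (t := t)) := by
  rintro ⟨k, i⟩ ⟨k', i'⟩ h
  have hi : ε * i < ε * t := by gcongr; exact_mod_cast i.2
  have hi' : ε * i' < ε * t := by gcongr; exact_mod_cast i'.2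
  have hi0 : 0 ≤ ε * i := by positivity
  have hi0' : 0 ≤ ε * i' := by positivity
  have hk : k = k' := by
    fin_cases k <;> fin_cases k' <;> simp [chordParam] at h ⊢ <;> linarith
  subst hk
  have : (i : ℝ) = i' := mul_left_cancel₀ hε.ne' (by simpa [chordParam] using h)
  exact Prod.ext rfl (Fin.ext (by exact_mod_cast this))

lemma chordPoint_injective : Function.Injective (chordPoint θ ε (t := t)) := fun q q' h =>
  have hq := chordParam_mem_Ico hε hθ hπ
  chordParam_injective hε hθ (unitCirclePt_injOn_Ico (hq q) (hq q') h)

lemma angle_chordPoint_chordVertex {i j : Fin t} (hij : i ≠ j) :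
    ∠ (chordPoint θ ε (0, i)) (chordPoint θ ε (chordVertex (i, j))) (chordPoint θ ε (1, i)) =
      θ := by
  have hθ0 : 0 ≤ θ := (by positivity : 0 ≤ ε * t).trans hθ
  have hdist : ∀ a b : Fin t, ε * a < ε * b + (π - θ) := fun a b => by
    have : ε * a < ε * t := by gcongr; exact_mod_cast a.2
    have : 0 ≤ ε * b := by positivity
    linarith
  rcases hij.lt_or_gt with hlt | hgt
  · have hv : chordVertex (i, j) = (1, j) := by simp [chordVertex, hlt.not_gt]
    have hij' : ε * i < ε * j := by gcongr; exact_mod_cast hlt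
    -- the vertex `b j` is taken at the parameter `b j - 2π`, below the chord
    rw [hv, chordPoint, chordPoint, chordPoint,
      ← unitCirclePt_sub_two_pi (chordParam θ ε (1, j)), angle_unitCirclePt_eq_half_sub] <;>
      simp [chordParam] <;> linarith [hdist j i]
  · have hv : chordVertex (i, j) = (0, j) := by simp [chordVertex, hgt]
    have hji' : ε * j < ε * i := by gcongr; exact_mod_cast hgt
    rw [hv, chordPoint, chordPoint, chordPoint, angle_unitCirclePt_eq_half_sub] <;>
      simp [chordParam] <;> linarith [hdist i j]

theorem realisesMult_chordPoint :
    RealisesMult (Finset.univ.image (chordPoint θ ε (t := t)) : Set (EuclideanSpace ℝ (Fin 2)))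
      (fun _ : Fin (t * (t - 1)) => θ) := by
  have hcard : Fintype.card (Finset.univ.offDiag : Finset (Fin t × Fin t)) = t * (t - 1) := by
    rw [Fintype.card_coe, Finset.offDiag_card, Finset.card_univ, Fintype.card_fin,
      Nat.mul_sub_one]
  have hinj := chordPoint_injective hε hθ hπ
  have hsphere (q : Fin 2 × Fin t) := unitCirclePt_mem_sphere (chordParam θ ε q)
  have hoff (p : (Finset.univ.offDiag : Finset (Fin t × Fin t))) : p.1.1 ≠ p.1.2 :=
    (Finset.mem_offDiag.1 p.2).2.2
  have hne (p : (Finset.univ.offDiag : Finset (Fin t × Fin t))) (k : Fin 2) :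
      chordPoint θ ε (k, p.1.1) ≠ chordPoint θ ε (chordVertex p.1) :=
    fun h => hoff p (congrArg Prod.snd (hinj h))
  refine realisesMult_const_of_card_eq hcard (fun p => chordPoint θ ε (0, p.1.1))
    (fun p => chordPoint θ ε (chordVertex p.1)) (fun p => chordPoint θ ε (1, p.1.1))
    (fun p => ⟨by simp, by simp, by simp, hne p 0, hne p 1,
      angle_chordPoint_chordVertex hε hθ hπ (hoff p)⟩) ?_
  intro p p' h
  obtain ⟨hV, hA⟩ := eq_and_eq_or_eq_of_rayOf_mem_pair (hsphere _) (hsphere _) (hsphere _)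
    (hsphere _) (hne p 0) (hne p' 0) (hne p' 1) ((Set.ext_iff.1 h _).1 (Set.mem_insert _ _))
  have hj : p.1.2 = p'.1.2 := (Prod.ext_iff.1 (hinj hV)).2
  have hi : p.1.1 = p'.1.1 := by
    obtain hA | hA := hA
    · exact congrArg Prod.snd (hinj hA)
    · exact absurd (Prod.ext_iff.1 (hinj hA)).1 zero_ne_one
  exact Subtype.ext (Prod.ext hi hj)

end Chords

theorem statement5_general (θ : ℝ) (hθ : θ ∈ Set.Ioo 0 Real.pi) (t : ℕ) :
    ∃ P : Finset (EuclideanSpace ℝ (Fin 2)), P.card = 2 * t ∧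
      RealisesMult (P : Set (EuclideanSpace ℝ (Fin 2))) (fun _ : Fin (t * (t - 1)) => θ) := by
  obtain ⟨hθ0, hθπ⟩ := hθ
  have hm : 0 < min θ (π - θ) := lt_min hθ0 (sub_pos.2 hθπ)
  obtain ⟨ε, hε, hεθ, hεπ⟩ : ∃ ε : ℝ, 0 < ε ∧ ε * t ≤ θ ∧ ε * t ≤ π - θ := by
    have hεt : min θ (π - θ) / (t + 1) * t ≤ min θ (π - θ) := by
      rw [div_mul_eq_mul_div, div_le_iff₀ (by positivity)]
      nlinarith
    exact ⟨_, by positivity, hεt.trans (min_le_left _ _), hεt.trans (min_le_right _ _)⟩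
  refine ⟨Finset.univ.image (chordPoint θ ε), ?_, realisesMult_chordPoint hε hεθ hεπ⟩
  rw [Finset.card_image_of_injective _ (chordPoint_injective hε hεθ hεπ)]
  simp

/-- any angle `θ ∈ (0, π)` can be realised with multiplicity
`t(t-1)` by `2t` points in the plane, for `t ≥ 2`. -/
theorem statement5 (θ : ℝ) (hθ : θ ∈ Set.Ioo 0 Real.pi) (t : ℕ) (ht : 2 ≤ t) :
    ∃ P : Finset (EuclideanSpace ℝ (Fin 2)), P.card = 2 * t ∧
      RealisesMult (P : Set (EuclideanSpace ℝ (Fin 2))) (fun _ : Fin (t * (t - 1)) => θ) :=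
  statement5_general θ hθ t
end

section
/- Suppose that θ = (θ₁, …, θₙ) and φ = (φ₁, …, φ_{n'}) are two tuples of angles, each angle strictly between 0 and π, realised with multiplicity by sets of m and m' points in the plane respectively, where m, m' ≥ 2. Then the concatenation of the two tuples can be realised with multiplicity by a set of m + m' − 2 points in the plane. -/
open EuclideanGeometry

/-!
Choose two points `p₁ ≠ p₂` of `P` spanning a supporting line of `P`, and likewise `q₁ ≠ q₂` for
`Q`. A similarity of the plane maps `q₁, q₂` to `p₁, p₂` and `Q` into the closed half-plane
opposite to `P`; it preserves angles and maps distinct ray pairs to distinct ray pairs. The union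
of `P` and the image of `Q` has at most `m + m' - 2` points, and a ray pair realised on both sides
would consist of two rays along the common line, hence form the angle `0` or `π`.
-/

open RealInnerProductSpace Module

section Similarity

variable {d : ℕ} {g : EuclideanSpace ℝ (Fin d) → EuclideanSpace ℝ (Fin d)} {c : ℝ}
  {L : EuclideanSpace ℝ (Fin d) ≃ₗᵢ[ℝ] EuclideanSpace ℝ (Fin d)}

lemma injective_of_sub_eq_smul (hg : ∀ x y, g x - g y = c • L (x - y)) (hc : c ≠ 0) :
    Function.Injective g := by
  intro x y h
  have := hg x y
  rw [h, sub_self, eq_comm, smul_eq_zero_iff_right hc, map_eq_zero_iff _ L.injective,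
    sub_eq_zero] at this
  exact this

lemma angle_eq_of_sub_eq_smul (hg : ∀ x y, g x - g y = c • L (x - y)) (hc : c ≠ 0)
    (A B C : EuclideanSpace ℝ (Fin d)) : ∠ (g A) (g B) (g C) = ∠ A B C := by
  simp only [EuclideanGeometry.angle, vsub_eq_sub, hg, InnerProductGeometry.angle_smul_smul hc]
  exact L.toLinearIsometry.angle_map _ _

lemma rayOf_eq_of_sub_eq_smul (hg : ∀ x y, g x - g y = c • L (x - y)) (hc : 0 < c)
    (B A : EuclideanSpace ℝ (Fin d)) : rayOf (g B) (g A) = Prod.map g L (rayOf B A) := by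
  refine Prod.ext rfl ?_
  simp only [rayOf, Prod.map_snd, hg, norm_smul, Real.norm_of_nonneg hc.le, L.norm_map, map_smul,
    smul_smul, mul_inv_rev]
  rw [mul_assoc, inv_mul_cancel₀ hc.ne', mul_one]

end Similarity

namespace RealisesMult

variable {d n n' : ℕ} {θ : Fin n → ℝ}

lemma mono {P R : Set (EuclideanSpace ℝ (Fin d))} (hPR : P ⊆ R) (h : RealisesMult P θ) :
    RealisesMult R θ := by
  obtain ⟨A, B, C, hABC, hinj⟩ := h
  refine ⟨A, B, C, fun i => ?_, hinj⟩
  obtain ⟨hA, hB, hC, hrest⟩ := hABC i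
  exact ⟨hPR hA, hPR hB, hPR hC, hrest⟩

lemma image {P : Set (EuclideanSpace ℝ (Fin d))} (h : RealisesMult P θ)
    {g : EuclideanSpace ℝ (Fin d) → EuclideanSpace ℝ (Fin d)} {c : ℝ}
    {L : EuclideanSpace ℝ (Fin d) ≃ₗᵢ[ℝ] EuclideanSpace ℝ (Fin d)}
    (hg : ∀ x y, g x - g y = c • L (x - y)) (hc : 0 < c) : RealisesMult (g '' P) θ := by
  have hginj := injective_of_sub_eq_smul hg hc.ne'
  obtain ⟨A, B, C, hABC, hinj⟩ := h
  refine ⟨g ∘ A, g ∘ B, g ∘ C, fun i => ?_, fun i j hij => hinj ?_⟩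
  · obtain ⟨hA, hB, hC, hAB, hCB, hangle⟩ := hABC i
    exact ⟨Set.mem_image_of_mem g hA, Set.mem_image_of_mem g hB, Set.mem_image_of_mem g hC,
      hginj.ne hAB, hginj.ne hCB, (angle_eq_of_sub_eq_smul hg hc.ne' _ _ _).trans hangle⟩
  · refine Set.image_injective.mpr (hginj.prodMap L.injective) ?_
    simpa only [Set.image_pair, Function.comp_apply, ← rayOf_eq_of_sub_eq_smul hg hc] using hij

lemma append {P S : Set (EuclideanSpace ℝ (Fin d))} {φ : Fin n' → ℝ}
    (hθ : ∀ i, θ i ∈ Set.Ioo 0 Real.pi) (hP : RealisesMult P θ) (hS : RealisesMult S φ)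
    (hcross : ∀ A B C A' B' C', A ∈ P → B ∈ P → C ∈ P → A' ∈ S → B' ∈ S → C' ∈ S →
      A ≠ B → C ≠ B → ∠ A B C ≠ 0 → ∠ A B C ≠ Real.pi →
      ({rayOf B A, rayOf B C} : Set _) ≠ {rayOf B' A', rayOf B' C'}) :
    RealisesMult (P ∪ S) (Fin.append θ φ) := by
  obtain ⟨A, B, C, hABC, hinj⟩ := hP
  obtain ⟨A', B', C', hABC', hinj'⟩ := hS
  refine ⟨Fin.append A A', Fin.append B B', Fin.append C C', fun i => ?_, ?_⟩
  · refine Fin.addCases (fun a => ?_) (fun b => ?_) i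
    · obtain ⟨hA, hB, hC, hrest⟩ := hABC a
      simpa only [Fin.append_left] using ⟨Or.inl hA, Or.inl hB, Or.inl hC, hrest⟩
    · obtain ⟨hA, hB, hC, hrest⟩ := hABC' b
      simpa only [Fin.append_right] using ⟨Or.inr hA, Or.inr hB, Or.inr hC, hrest⟩
  · have hpairs : (fun i => ({rayOf (Fin.append B B' i) (Fin.append A A' i),
          rayOf (Fin.append B B' i) (Fin.append C C' i)} : Set _)) =
        Fin.append (fun a => {rayOf (B a) (A a), rayOf (B a) (C a)})
          (fun b => {rayOf (B' b) (A' b), rayOf (B' b) (C' b)}) := by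
      funext i
      refine Fin.addCases (fun a => ?_) (fun b => ?_) i <;> simp
    rw [hpairs, Fin.append_injective_iff]
    refine ⟨hinj, hinj', fun a b => ?_⟩
    obtain ⟨hA, hB, hC, hAB, hCB, hangle⟩ := hABC a
    obtain ⟨hA', hB', hC', -⟩ := hABC' b
    exact hcross _ _ _ _ _ _ hA hB hC hA' hB' hC' hAB hCB (hangle ▸ (hθ a).1.ne')
      (hangle ▸ (hθ a).2.ne)

end RealisesMult

section Plane

variable {V : Type*} [NormedAddCommGroup V] [InnerProductSpace ℝ V]

lemma collinear_of_inner_sub_eq_zero (hV : finrank ℝ V = 2) {s : Set V} {p w : V} (hw : w ≠ 0)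
    (hs : ∀ x ∈ s, ⟪x - p, w⟫ = 0) : Collinear ℝ s := by
  have : FiniteDimensional ℝ V := Module.finite_of_finrank_eq_succ hV
  have hspan : vectorSpan ℝ s ≤ (ℝ ∙ w)ᗮ := by
    rw [vectorSpan_def, Submodule.span_le]
    rintro _ ⟨x, hx, y, hy, rfl⟩
    rw [SetLike.mem_coe, Submodule.mem_orthogonal_singleton_iff_inner_right, real_inner_comm]
    change ⟪x - y, w⟫ = 0
    rw [← sub_sub_sub_cancel_right x y p, inner_sub_left, hs x hx, hs y hy, sub_zero]
  have hperp : finrank ℝ (ℝ ∙ w)ᗮ = 1 := by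
    have := (ℝ ∙ w).finrank_add_finrank_orthogonal
    rw [finrank_span_singleton hw, hV] at this
    omega
  rw [collinear_iff_finrank_le_one, ← hperp]
  exact Submodule.finrank_mono hspan

lemma orthonormal_normalize_pair {x y : V} (hx : x ≠ 0) (hy : y ≠ 0) (hxy : ⟪x, y⟫ = 0) :
    Orthonormal ℝ ![‖x‖⁻¹ • x, ‖y‖⁻¹ • y] := by
  have hunit : ∀ z : V, z ≠ 0 → ‖‖z‖⁻¹ • z‖ = 1 := fun z hz => by
    rw [norm_smul, norm_inv, norm_norm, inv_mul_cancel₀ (norm_ne_zero_iff.mpr hz)]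
  rw [orthonormal_iff_ite]
  intro i j
  fin_cases i <;> fin_cases j <;>
    simp [real_inner_smul_left, real_inner_smul_right, hxy, real_inner_comm x y,
      hunit x hx, hunit y hy]

lemma exists_linearIsometryEquiv_apply_eq {ι : Type*} [Fintype ι] [Nonempty ι] {e f : ι → V}
    (he : Orthonormal ℝ e) (hf : Orthonormal ℝ f) (hcard : Fintype.card ι = finrank ℝ V) :
    ∃ L : V ≃ₗᵢ[ℝ] V, ∀ i, L (e i) = f i := by
  let be := (basisOfOrthonormalOfCardEqFinrank he hcard).toOrthonormalBasis (by simpa using he)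
  let bf := (basisOfOrthonormalOfCardEqFinrank hf hcard).toOrthonormalBasis (by simpa using hf)
  refine ⟨be.equiv bf (Equiv.refl ι), fun i => ?_⟩
  simpa only [be, bf, Basis.coe_toOrthonormalBasis, coe_basisOfOrthonormalOfCardEqFinrank,
    Equiv.refl_apply] using be.equiv_apply_basis bf (Equiv.refl ι) i

lemma exists_similarity_swapping_sides (hV : finrank ℝ V = 2) {u v w w' : V} (hu : u ≠ 0)
    (hv : v ≠ 0) (hw : w ≠ 0) (hw' : w' ≠ 0) (huw' : ⟪u, w'⟫ = 0) (hvw : ⟪v, w⟫ = 0) :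
    ∃ c : ℝ, 0 < c ∧ ∃ L : V ≃ₗᵢ[ℝ] V, c • L u = v ∧ ∀ y, ⟪y, w'⟫ ≤ 0 → 0 ≤ ⟪L y, w⟫ := by
  obtain ⟨L, hL⟩ := exists_linearIsometryEquiv_apply_eq (orthonormal_normalize_pair hu hw' huw')
    (orthonormal_normalize_pair hv (neg_ne_zero.mpr hw) (by rwa [inner_neg_right, neg_eq_zero]))
    (by simp [hV])
  refine ⟨‖v‖ / ‖u‖, by positivity, L, ?_, fun y hy => ?_⟩
  · calc (‖v‖ / ‖u‖) • L u = ‖v‖ • L (‖u‖⁻¹ • u) := by rw [map_smul, smul_smul, div_eq_mul_inv]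
      _ = v := by
        rw [← Matrix.cons_val_zero (‖u‖⁻¹ • u) ![‖w'‖⁻¹ • w'], hL, Matrix.cons_val_zero, smul_smul,
          mul_inv_cancel₀ (norm_ne_zero_iff.mpr hv), one_smul]
  · have key := L.inner_map_map y (‖w'‖⁻¹ • w')
    have hL₁ : L (‖w'‖⁻¹ • w') = ‖-w‖⁻¹ • -w := hL 1
    rw [hL₁, norm_neg, inner_smul_right, inner_smul_right, inner_neg_right] at key
    have hwpos : 0 < ‖w‖⁻¹ := inv_pos.mpr (norm_pos_iff.mpr hw)
    nlinarith [inv_nonneg.mpr (norm_nonneg w')]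

end Plane

lemma inner_vec_two (x : EuclideanSpace ℝ (Fin 2)) (a b : ℝ) :
    ⟪x, !₂[a, b]⟫ = a * x 0 + b * x 1 := by
  simp [PiLp.inner_apply, Fin.sum_univ_two]

lemma exists_supporting_line {P : Finset (EuclideanSpace ℝ (Fin 2))} (hP : 2 ≤ P.card) :
    ∃ p₁ ∈ P, ∃ p₂ ∈ P, p₁ ≠ p₂ ∧
      ∃ w ≠ 0, ⟪p₂ - p₁, w⟫ = 0 ∧ ∀ p ∈ P, ⟪p - p₁, w⟫ ≤ 0 := by
  obtain ⟨p₁, hp₁, hmax⟩ := P.exists_max_image (· 0) (Finset.card_pos.mp (by omega))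
  by_cases hvert : ∃ p₂ ∈ P, p₂ ≠ p₁ ∧ p₂ 0 = p₁ 0
  · obtain ⟨p₂, hp₂, hne, heq⟩ := hvert
    refine ⟨p₁, hp₁, p₂, hp₂, hne.symm, !₂[1, 0], ?_, ?_, fun p hp => ?_⟩
    · intro h
      simpa using congrArg (· 0) h
    · simp [inner_vec_two, heq]
    · simpa [inner_vec_two] using hmax p hp
  · push Not at hvert
    have hleft : ∀ p ∈ P.erase p₁, 0 < p₁ 0 - p 0 := fun p hp => by
      obtain ⟨hne, hp⟩ := Finset.mem_erase.mp hp
      linarith [lt_of_le_of_ne (hmax p hp) (hvert p hp hne)]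
    have hne : (P.erase p₁).Nonempty := by
      rw [← Finset.card_pos, Finset.card_erase_of_mem hp₁]
      omega
    -- all other points lie strictly left of `p₁`; join `p₁` to one of largest slope from `p₁`
    obtain ⟨p₂, hp₂, hslope⟩ :=
      (P.erase p₁).exists_max_image (fun p => (p 1 - p₁ 1) / (p₁ 0 - p 0)) hne
    refine ⟨p₁, hp₁, p₂, Finset.mem_of_mem_erase hp₂, (Finset.ne_of_mem_erase hp₂).symm,
      !₂[(p₂ 1 - p₁ 1) / (p₁ 0 - p₂ 0), 1], ?_, ?_, fun p hp => ?_⟩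
    · intro h
      simpa using congrArg (· 1) h
    · have := (hleft p₂ hp₂).ne'
      simp only [inner_vec_two, PiLp.sub_apply]
      field_simp
      ring
    · by_cases hp₁p : p = p₁
      · simp [hp₁p]
      have hp' : p ∈ P.erase p₁ := Finset.mem_erase.mpr ⟨hp₁p, hp⟩
      have h := hslope p hp'
      rw [div_le_iff₀ (hleft p hp')] at h
      simp only [inner_vec_two, PiLp.sub_apply]
      linarith

lemma inner_sub_eq_zero_of_rayOf_eq {d : ℕ} {B X Y w : EuclideanSpace ℝ (Fin d)}
    (hX : ⟪X - B, w⟫ ≤ 0) (hY : 0 ≤ ⟪Y - B, w⟫) (hXB : X ≠ B) (h : rayOf B X = rayOf B Y) :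
    ⟪X - B, w⟫ = 0 := by
  have h' := congrArg (fun r => ⟪r.2, w⟫) h
  simp only [rayOf, real_inner_smul_left] at h'
  have hpos : 0 < ‖X - B‖⁻¹ := inv_pos.mpr (norm_pos_iff.mpr (sub_ne_zero.mpr hXB))
  refine le_antisymm hX ((mul_nonneg_iff_of_pos_left hpos).mp ?_)
  rw [h']
  exact mul_nonneg (inv_nonneg.mpr (norm_nonneg _)) hY

lemma rayPair_ne_of_opposite_sides {P S : Set (EuclideanSpace ℝ (Fin 2))}
    {p w : EuclideanSpace ℝ (Fin 2)} (hw : w ≠ 0) (hP : ∀ x ∈ P, ⟪x - p, w⟫ ≤ 0)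
    (hS : ∀ x ∈ S, 0 ≤ ⟪x - p, w⟫)
    {A B C A' B' C' : EuclideanSpace ℝ (Fin 2)} (hA : A ∈ P) (hB : B ∈ P) (hC : C ∈ P)
    (hA' : A' ∈ S) (hB' : B' ∈ S) (hC' : C' ∈ S) (hAB : A ≠ B) (hCB : C ≠ B)
    (h0 : ∠ A B C ≠ 0) (hπ : ∠ A B C ≠ Real.pi) :
    ({rayOf B A, rayOf B C} : Set _) ≠ {rayOf B' A', rayOf B' C'} := by
  intro h
  have hmatch : ∀ X, rayOf B X ∈ ({rayOf B' A', rayOf B' C'} : Set _) →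
      ∃ Y ∈ S, rayOf B X = rayOf B' Y := by
    rintro X (hX | hX)
    exacts [⟨A', hA', hX⟩, ⟨C', hC', hX⟩]
  obtain ⟨_, -, hBB'⟩ := hmatch A (h ▸ Set.mem_insert _ _)
  obtain rfl : B = B' := congrArg Prod.fst hBB'
  have hBp : ⟪B - p, w⟫ = 0 := le_antisymm (hP B hB) (hS B hB')
  have hshift : ∀ X, ⟪X - B, w⟫ = ⟪X - p, w⟫ := fun X => by
    rw [← sub_sub_sub_cancel_right X B p, inner_sub_left, hBp, sub_zero]
  have hline : ∀ X ∈ P, X ≠ B → rayOf B X ∈ ({rayOf B A', rayOf B C'} : Set _) →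
      ⟪X - B, w⟫ = 0 := by
    intro X hX hXB hXmem
    obtain ⟨Y, hY, hXY⟩ := hmatch X hXmem
    exact inner_sub_eq_zero_of_rayOf_eq (hshift X ▸ hP X hX) (hshift Y ▸ hS Y hY) hXB hXY
  have hcol : Collinear ℝ {A, B, C} := by
    refine collinear_of_inner_sub_eq_zero finrank_euclideanSpace_fin hw (p := B) ?_
    simp only [Set.mem_insert_iff, Set.mem_singleton_iff, forall_eq_or_imp, forall_eq, sub_self,
      inner_zero_left, true_and]
    exact ⟨hline A hA hAB (h ▸ Set.mem_insert _ _),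
      hline C hC hCB (h ▸ Set.mem_insert_of_mem _ rfl)⟩
  rcases collinear_iff_eq_or_eq_or_angle_eq_zero_or_angle_eq_pi.mp hcol with h' | h' | h' | h'
  exacts [hAB h', hCB h', h0 h', hπ h']

lemma Finset.card_union_add_two_le {α : Type*} [DecidableEq α] {s t : Finset α} {a b : α}
    (hab : a ≠ b) (ha : a ∈ s ∩ t) (hb : b ∈ s ∩ t) : (s ∪ t).card + 2 ≤ s.card + t.card := by
  rw [← Finset.card_union_add_card_inter, ← Finset.card_pair hab]
  gcongr
  exact Finset.insert_subset ha (Finset.singleton_subset_iff.mpr hb)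

theorem statement6_general (n n' m m' : ℕ) (hm : 2 ≤ m) (hm' : 2 ≤ m')
    (θ : Fin n → ℝ) (φ : Fin n' → ℝ)
    (hθ : ∀ i, θ i ∈ Set.Ioo 0 Real.pi)
    (P : Finset (EuclideanSpace ℝ (Fin 2))) (hP : P.card = m)
    (hPθ : RealisesMult (P : Set (EuclideanSpace ℝ (Fin 2))) θ)
    (Q : Finset (EuclideanSpace ℝ (Fin 2))) (hQ : Q.card = m')
    (hQφ : RealisesMult (Q : Set (EuclideanSpace ℝ (Fin 2))) φ) :
    ∃ R : Finset (EuclideanSpace ℝ (Fin 2)), R.card = m + m' - 2 ∧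
      RealisesMult (R : Set (EuclideanSpace ℝ (Fin 2))) (Fin.append θ φ) := by
  obtain ⟨p₁, hp₁, p₂, hp₂, hp₁₂, w, hw, hp₁₂w, hPw⟩ := exists_supporting_line (hP ▸ hm)
  obtain ⟨q₁, hq₁, q₂, hq₂, hq₁₂, w', hw', hq₁₂w', hQw'⟩ := exists_supporting_line (hQ ▸ hm')
  obtain ⟨c, hc, L, hLu, hLw⟩ := exists_similarity_swapping_sides finrank_euclideanSpace_fin
    (sub_ne_zero.mpr hq₁₂.symm) (sub_ne_zero.mpr hp₁₂.symm) hw hw' hq₁₂w' hp₁₂w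
  set g := fun x => p₁ + c • L (x - q₁)
  have hg : ∀ x y, g x - g y = c • L (x - y) := fun x y => by
    simp only [g, add_sub_add_left_eq_sub, ← smul_sub, ← map_sub, sub_sub_sub_cancel_right]
  have hgQ : ∀ x ∈ Q, 0 ≤ ⟪g x - p₁, w⟫ := fun x hx => by
    simpa only [g, add_sub_cancel_left, real_inner_smul_left] using
      mul_nonneg hc.le (hLw _ (hQw' x hx))
  have hcard : (P ∪ Q.image g).card ≤ m + m' - 2 := by
    have h₁ : g q₁ = p₁ := by simp [g]
    have h₂ : g q₂ = p₂ := by rw [← add_sub_cancel p₁ p₂, ← hLu]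
    have := Finset.card_union_add_two_le hp₁₂
      (Finset.mem_inter.mpr ⟨hp₁, h₁ ▸ Finset.mem_image_of_mem g hq₁⟩)
      (Finset.mem_inter.mpr ⟨hp₂, h₂ ▸ Finset.mem_image_of_mem g hq₂⟩)
    rw [Finset.card_image_of_injective _ (injective_of_sub_eq_smul hg hc.ne')] at this
    omega
  obtain ⟨R, hR, hRcard⟩ := Infinite.exists_superset_card_eq _ _ hcard
  refine ⟨R, hRcard, RealisesMult.mono (by exact_mod_cast hR) ?_⟩
  rw [Finset.coe_union, Finset.coe_image]
  refine hPθ.append hθ (hQφ.image hg hc) fun A B C A' B' C' hA hB hC hA' hB' hC' =>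
    rayPair_ne_of_opposite_sides hw hPw ?_ hA hB hC hA' hB' hC'
  rintro _ ⟨x, hx, rfl⟩
  exact hgQ x hx

/-- if the tuples `θ` and `φ` of angles in `(0, π)` are realised
with multiplicity by `m` and `m'` points in the plane respectively
(`m, m' ≥ 2`), then their concatenation is realised with multiplicity by
`m + m' - 2` points in the plane. -/
theorem statement6 (n n' m m' : ℕ) (hm : 2 ≤ m) (hm' : 2 ≤ m')
    (θ : Fin n → ℝ) (φ : Fin n' → ℝ)
    (hθ : ∀ i, θ i ∈ Set.Ioo 0 Real.pi) (hφ : ∀ i, φ i ∈ Set.Ioo 0 Real.pi)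
    (P : Finset (EuclideanSpace ℝ (Fin 2))) (hP : P.card = m)
    (hPθ : RealisesMult (P : Set (EuclideanSpace ℝ (Fin 2))) θ)
    (Q : Finset (EuclideanSpace ℝ (Fin 2))) (hQ : Q.card = m')
    (hQφ : RealisesMult (Q : Set (EuclideanSpace ℝ (Fin 2))) φ) :
    ∃ R : Finset (EuclideanSpace ℝ (Fin 2)), R.card = m + m' - 2 ∧
      RealisesMult (R : Set (EuclideanSpace ℝ (Fin 2))) (Fin.append θ φ) :=
  statement6_general n n' m m' hm hm' θ φ hθ P hP hPθ Q hQ hQφ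
end

section
/- Suppose m ≥ 2 and n = 2m−3. Then there exists a non-zero polynomial g in n real variables z₁, …, zₙ with the following property: for any set of m points in the plane realising angles θ₁, …, θₙ (each strictly between 0 and π), one has g(sin²θ₁, sin²θ₂, …, sin²θₙ) = 0. -/
/-!
After a similarity sending two of the points to `(0,0)` and `(1,0)`, a configuration of
`m = k + 2` points in the plane is described by `2k` real coordinates, and
`sin² ∠ABC = ((A - B) ∧ (C - B))² / (|A - B|² |C - B|²)` is a rational function of them.
Once it is fixed which points form each of the `n = 2k + 1` angles, the `n` rational functions
live in a field of transcendence degree `2k < n` over `ℝ`, so they satisfy a nonzero polynomial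
relation, which specialises to every configuration. Multiplying these relations over the
finitely many ways of choosing the points gives `g`.
-/

open EuclideanGeometry

open MvPolynomial Cardinal

universe u

theorem trdeg_fractionRing_mvPolynomial (k σ : Type u) [Field k] :
    Algebra.trdeg k (FractionRing (MvPolynomial σ k)) = #σ := by
  rw [← trdeg_add_eq k (MvPolynomial σ k), MvPolynomial.trdeg_of_isDomain, Cardinal.lift_id,
    trdeg_eq_zero_iff.2 (IsLocalization.isAlgebraic _ (nonZeroDivisors _)), add_zero]

theorem exists_aeval_eq_zero_of_card_lt {k σ ι : Type u} [Field k] [Finite σ]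
    (f : ι → FractionRing (MvPolynomial σ k)) (h : Nat.card σ < Nat.card ι) :
    ∃ g : MvPolynomial ι k, g ≠ 0 ∧ aeval f g = 0 := by
  by_contra! hf
  have hind : AlgebraicIndependent k f :=
    algebraicIndependent_iff.2 fun g hg => by_contra fun h0 => hf g h0 hg
  have hle := hind.cardinalMk_le_trdeg
  rw [trdeg_fractionRing_mvPolynomial] at hle
  have : Finite ι := Cardinal.mk_lt_aleph0_iff.1 (hle.trans_lt Cardinal.mk_lt_aleph0)
  rw [← Nat.cast_card, ← Nat.cast_card, Nat.cast_le] at hle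
  omega

/- Both the fraction field and `L` receive the localization of `R` at the elements that `φ`
does not kill; the relation holds there because that localization embeds in the fraction field. -/
theorem aeval_div_eq_zero_of_aeval_fractionRing {k R L ι : Type*} [CommRing k] [CommRing R]
    [IsDomain R] [Field L] [Algebra k R] [Algebra k L] (φ : R →ₐ[k] L) (N D : ι → R)
    (hD : ∀ i, φ (D i) ≠ 0) {g : MvPolynomial ι k}
    (hg : aeval (fun i => algebraMap R (FractionRing R) (N i) /
      algebraMap R (FractionRing R) (D i)) g = 0) :
    aeval (fun i => φ (N i) / φ (D i)) g = 0 := by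
  set S := (nonZeroDivisors L).comap φ
  have hS : S ≤ nonZeroDivisors R := fun s hs =>
    mem_nonZeroDivisors_of_ne_zero fun h0 => by simp [S, h0] at hs
  have hDK : ∀ s : S, algebraMap R (FractionRing R) s ≠ 0 := fun s =>
    IsFractionRing.to_map_ne_zero_of_mem_nonZeroDivisors (hS s.2)
  have hφS : ∀ s : S, IsUnit (φ s) := fun s => (mem_nonZeroDivisors_iff_ne_zero.1 s.2).isUnit
  let ev := IsLocalization.liftAlgHom (S := Localization S) hφS
  let emb := IsLocalization.liftAlgHom (S := Localization S)
    (f := IsScalarTower.toAlgHom k R (FractionRing R)) fun s => (hDK s).isUnit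
  have hemb : Function.Injective emb := by
    refine (IsLocalization.lift_injective_iff _).2 fun x y => ?_
    rw [(IsLocalization.injective (Localization S) hS).eq_iff]
    exact (IsFractionRing.injective R (FractionRing R)).eq_iff.symm
  let F : ι → Localization S := fun i =>
    IsLocalization.mk' _ (N i) (⟨D i, mem_nonZeroDivisors_of_ne_zero (hD i)⟩ : S)
  have hembF : ∀ i, emb (F i) =
      algebraMap R (FractionRing R) (N i) / algebraMap R (FractionRing R) (D i) := fun i =>
    (IsLocalization.lift_mk'_spec _ _ _ _).2 (mul_div_cancel₀ _ (hDK ⟨D i, _⟩)).symm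
  have hevF : ∀ i, ev (F i) = φ (N i) / φ (D i) := fun i =>
    (IsLocalization.lift_mk'_spec _ _ _ _).2 (mul_div_cancel₀ _ (hD i)).symm
  have hF : aeval F g = 0 := hemb <| by simpa only [comp_aeval_apply, hembF, map_zero] using hg
  simpa only [comp_aeval_apply, hevF, map_zero] using congrArg ev hF

theorem exists_eval_div_eq_zero_of_card_lt {k σ ι : Type u} [Field k] [Finite σ]
    (N D : ι → MvPolynomial σ k) (h : Nat.card σ < Nat.card ι) :
    ∃ g : MvPolynomial ι k, g ≠ 0 ∧
      ∀ x : σ → k, (∀ i, eval x (D i) ≠ 0) → eval (fun i => eval x (N i) / eval x (D i)) g = 0 :=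
  let ⟨g, hg0, hg⟩ := exists_aeval_eq_zero_of_card_lt _ h
  ⟨g, hg0, fun x hx => aeval_div_eq_zero_of_aeval_fractionRing (aeval x) N D hx hg⟩

section PlaneCoordinates

variable {R S ι : Type*} [CommRing R] [CommRing S]

def wedge (u v : Fin 2 → R) : R := u 0 * v 1 - u 1 * v 0

def sqNorm (u : Fin 2 → R) : R := u 0 ^ 2 + u 1 ^ 2

def sinSqNum (p : ι → Fin 2 → R) (a b c : ι) : R :=
  wedge (p a - p b) (p c - p b) ^ 2

def sinSqDen (p : ι → Fin 2 → R) (a b c : ι) : R :=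
  sqNorm (p a - p b) * sqNorm (p c - p b)

theorem map_sinSqNum (f : R →+* S) (p : ι → Fin 2 → R) (a b c : ι) :
    f (sinSqNum p a b c) = sinSqNum (fun j d => f (p j d)) a b c := by
  simp [sinSqNum, wedge]

theorem map_sinSqDen (f : R →+* S) (p : ι → Fin 2 → R) (a b c : ι) :
    f (sinSqDen p a b c) = sinSqDen (fun j d => f (p j d)) a b c := by
  simp [sinSqDen, sqNorm]

end PlaneCoordinates

section Normalization

variable {F ι : Type*} [Field F]

/-- `u / w`, identifying `F²` with `F[i]`. -/
def cdiv (u w : Fin 2 → F) : Fin 2 → F :=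
  ![(u 0 * w 0 + u 1 * w 1) / sqNorm w, wedge w u / sqNorm w]

theorem cdiv_sub (u v w : Fin 2 → F) : cdiv (u - v) w = cdiv u w - cdiv v w := by
  ext d; fin_cases d <;> simp [cdiv, wedge] <;> ring

theorem cdiv_self {w : Fin 2 → F} (hw : sqNorm w ≠ 0) : cdiv w w = ![1, 0] := by
  ext d; fin_cases d
  · simpa [cdiv, sqNorm, sq] using hw
  · simp [cdiv, wedge, mul_comm]

theorem wedge_cdiv (u v : Fin 2 → F) {w : Fin 2 → F} (hw : sqNorm w ≠ 0) :
    wedge (cdiv u w) (cdiv v w) = wedge u v / sqNorm w := by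
  simp only [cdiv, wedge, Matrix.cons_val_zero, Matrix.cons_val_one]
  field_simp
  simp only [sqNorm]
  ring

theorem sqNorm_cdiv (u : Fin 2 → F) {w : Fin 2 → F} (hw : sqNorm w ≠ 0) :
    sqNorm (cdiv u w) = sqNorm u / sqNorm w := by
  simp only [cdiv, wedge, sqNorm, Matrix.cons_val_zero, Matrix.cons_val_one] at hw ⊢
  field_simp
  ring

theorem sinSqNum_cdiv (q : ι → Fin 2 → F) (o : Fin 2 → F) {w : Fin 2 → F} (hw : sqNorm w ≠ 0)
    (a b c : ι) :
    sinSqNum (fun j => cdiv (q j - o) w) a b c = sinSqNum q a b c / sqNorm w ^ 2 := by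
  simp only [sinSqNum, ← cdiv_sub, sub_sub_sub_cancel_right, wedge_cdiv _ _ hw, div_pow]

theorem sinSqDen_cdiv (q : ι → Fin 2 → F) (o : Fin 2 → F) {w : Fin 2 → F} (hw : sqNorm w ≠ 0)
    (a b c : ι) :
    sinSqDen (fun j => cdiv (q j - o) w) a b c = sinSqDen q a b c / sqNorm w ^ 2 := by
  simp only [sinSqDen, ← cdiv_sub, sub_sub_sub_cancel_right, sqNorm_cdiv _ hw]
  ring

noncomputable def genericConfig (R : Type*) [CommRing R] (k : ℕ) :
    Fin (k + 2) → Fin 2 → MvPolynomial (Fin k × Fin 2) R :=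
  Fin.cons 0 (Fin.cons ![1, 0] fun i d => X (i, d))

def normalizedCoords {k : ℕ} (q : Fin (k + 2) → Fin 2 → F) : Fin k × Fin 2 → F :=
  fun x => cdiv (q x.1.succ.succ - q 0) (q 1 - q 0) x.2

theorem eval_genericConfig {k : ℕ} (q : Fin (k + 2) → Fin 2 → F) (hq : sqNorm (q 1 - q 0) ≠ 0)
    (j : Fin (k + 2)) (d : Fin 2) :
    eval (normalizedCoords q) (genericConfig F k j d) = cdiv (q j - q 0) (q 1 - q 0) d := by
  induction j using Fin.cases with
  | zero => fin_cases d <;> simp [genericConfig, cdiv, wedge]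
  | succ j =>
    induction j using Fin.cases with
    | zero => fin_cases d <;> simp [genericConfig, cdiv_self hq]
    | succ i => simp [genericConfig, normalizedCoords]

theorem eval_sinSqNum_genericConfig {k : ℕ} (q : Fin (k + 2) → Fin 2 → F)
    (hq : sqNorm (q 1 - q 0) ≠ 0) (a b c : Fin (k + 2)) :
    eval (normalizedCoords q) (sinSqNum (genericConfig F k) a b c) =
      sinSqNum q a b c / sqNorm (q 1 - q 0) ^ 2 := by
  rw [map_sinSqNum]
  simp only [eval_genericConfig q hq]
  exact sinSqNum_cdiv q _ hq a b c

theorem eval_sinSqDen_genericConfig {k : ℕ} (q : Fin (k + 2) → Fin 2 → F)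
    (hq : sqNorm (q 1 - q 0) ≠ 0) (a b c : Fin (k + 2)) :
    eval (normalizedCoords q) (sinSqDen (genericConfig F k) a b c) =
      sinSqDen q a b c / sqNorm (q 1 - q 0) ^ 2 := by
  rw [map_sinSqDen]
  simp only [eval_genericConfig q hq]
  exact sinSqDen_cdiv q _ hq a b c

end Normalization

section Euclidean

theorem sqNorm_ofLp (u : EuclideanSpace ℝ (Fin 2)) : sqNorm u.ofLp = ‖u‖ ^ 2 := by
  rw [EuclideanSpace.real_norm_sq_eq, Fin.sum_univ_two, sqNorm]

theorem sin_sq_angle_eq (u v : EuclideanSpace ℝ (Fin 2)) (hu : u ≠ 0) (hv : v ≠ 0) :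
    Real.sin (InnerProductGeometry.angle u v) ^ 2 =
      wedge u.ofLp v.ofLp ^ 2 / (sqNorm u.ofLp * sqNorm v.ofLp) := by
  have hinner : inner ℝ u v = u 0 * v 0 + u 1 * v 1 := by
    simp [PiLp.inner_apply, Fin.sum_univ_two, mul_comm]
  rw [Real.sin_sq, InnerProductGeometry.cos_angle, div_pow, mul_pow, ← sqNorm_ofLp,
    ← sqNorm_ofLp, hinner]
  have hu' : sqNorm u.ofLp ≠ 0 := by rw [sqNorm_ofLp]; positivity
  have hv' : sqNorm v.ofLp ≠ 0 := by rw [sqNorm_ofLp]; positivity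
  field_simp
  simp only [sqNorm, wedge]
  ring

variable {ι : Type*} (q : ι → EuclideanSpace ℝ (Fin 2)) {a b c : ι}

theorem sinSqDen_ne_zero (hab : q a ≠ q b) (hcb : q c ≠ q b) :
    sinSqDen (fun j => (q j).ofLp) a b c ≠ 0 := by
  simp only [sinSqDen, ← WithLp.ofLp_sub, sqNorm_ofLp]
  have := sub_ne_zero.2 hab
  have := sub_ne_zero.2 hcb
  positivity

theorem sin_sq_angle_eq_sinSqNum_div (hab : q a ≠ q b) (hcb : q c ≠ q b) :
    Real.sin (∠ (q a) (q b) (q c)) ^ 2 =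
      sinSqNum (fun j => (q j).ofLp) a b c / sinSqDen (fun j => (q j).ofLp) a b c := by
  rw [EuclideanGeometry.angle, vsub_eq_sub, vsub_eq_sub,
    sin_sq_angle_eq _ _ (sub_ne_zero.2 hab) (sub_ne_zero.2 hcb)]
  simp [sinSqNum, sinSqDen]

end Euclidean

theorem Realises.exists_of_range {ι : Type*} {d : ℕ} {q : ι → EuclideanSpace ℝ (Fin d)} {θ : ℝ}
    (h : Realises (Set.range q) θ) :
    ∃ a b c, q a ≠ q b ∧ q c ≠ q b ∧ ∠ (q a) (q b) (q c) = θ := by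
  obtain ⟨_, _, _, ⟨a, rfl⟩, ⟨b, rfl⟩, ⟨c, rfl⟩, hab, hcb, hθ⟩ := h
  exact ⟨a, b, c, hab, hcb, hθ⟩

theorem Finset.exists_injective_range_eq {α : Type*} {P : Finset α} {m : ℕ} (hP : P.card = m) :
    ∃ q : Fin m → α, Function.Injective q ∧ Set.range q = P := by
  let e := P.equivFinOfCardEq hP
  refine ⟨Subtype.val ∘ e.symm, Subtype.val_injective.comp e.symm.injective, ?_⟩
  rw [Set.range_comp, e.symm.range_eq_univ, Set.image_univ, Subtype.range_coe]

/-- for `m ≥ 2`, `n = 2m-3`, there is a non-zero polynomial `g`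
in `n` variables vanishing on `(sin² θ₁, …, sin² θₙ)` for every `n`-tuple of
angles in `(0, π)` realised by some `m` points in the plane. -/
theorem statement10 (m n : ℕ) (hm : 2 ≤ m) (hn : n = 2 * m - 3) :
    ∃ g : MvPolynomial (Fin n) ℝ, g ≠ 0 ∧
      ∀ (P : Finset (EuclideanSpace ℝ (Fin 2))), P.card = m →
        ∀ θ : Fin n → ℝ, (∀ i, θ i ∈ Set.Ioo 0 Real.pi) →
          (∀ i, Realises (P : Set (EuclideanSpace ℝ (Fin 2))) (θ i)) →
          MvPolynomial.eval (fun i => Real.sin (θ i) ^ 2) g = 0 := by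
  obtain ⟨k, rfl⟩ : ∃ k, m = k + 2 := ⟨m - 2, by omega⟩
  have hcard : Nat.card (Fin k × Fin 2) < Nat.card (Fin n) := by simp; omega
  choose g hg0 hg using fun τ : Fin n → Fin (k + 2) × Fin (k + 2) × Fin (k + 2) =>
    exists_eval_div_eq_zero_of_card_lt
      (fun i => sinSqNum (genericConfig ℝ k) (τ i).1 (τ i).2.1 (τ i).2.2)
      (fun i => sinSqDen (genericConfig ℝ k) (τ i).1 (τ i).2.1 (τ i).2.2) hcard
  refine ⟨∏ τ, g τ, Finset.prod_ne_zero_iff.2 fun τ _ => hg0 τ, fun P hP θ _ hθ => ?_⟩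
  obtain ⟨q, hq, hqP⟩ := Finset.exists_injective_range_eq hP
  rw [← hqP] at hθ
  choose a b c hab hcb hθabc using fun i => (hθ i).exists_of_range
  have h10 : sqNorm ((q 1).ofLp - (q 0).ofLp) ≠ 0 := by
    rw [← WithLp.ofLp_sub, sqNorm_ofLp]
    exact pow_ne_zero _ (norm_ne_zero_iff.2 (sub_ne_zero.2 (hq.ne (by simp))))
  set x := normalizedCoords fun j => (q j).ofLp
  have hsin : ∀ i, Real.sin (θ i) ^ 2 =
      eval x (sinSqNum (genericConfig ℝ k) (a i) (b i) (c i)) /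
        eval x (sinSqDen (genericConfig ℝ k) (a i) (b i) (c i)) := fun i => by
    rw [← hθabc, sin_sq_angle_eq_sinSqNum_div q (hab i) (hcb i),
      eval_sinSqNum_genericConfig _ h10, eval_sinSqDen_genericConfig _ h10,
      div_div_div_cancel_right₀ (pow_ne_zero _ h10)]
  have hden : ∀ i, eval x (sinSqDen (genericConfig ℝ k) (a i) (b i) (c i)) ≠ 0 := fun i => by
    rw [eval_sinSqDen_genericConfig _ h10]
    exact div_ne_zero (sinSqDen_ne_zero q (hab i) (hcb i)) (pow_ne_zero _ h10)
  rw [map_prod, funext hsin]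
  exact Finset.prod_eq_zero (Finset.mem_univ _) (hg (fun i => (a i, b i, c i)) x hden)
end

section
/- Suppose m ≥ 2 and n = 2m−3. Let S ⊆ [0,π]^n be the set of n-tuples of angles (with all entries strictly between 0 and π) that can be realised by a set of m points in the plane. Then S has n-dimensional Lebesgue measure zero. -/
/-
A similarity of the plane preserves angles, so a set of `m = k + 2` points may be assumed to
contain `0` and `1` in `ℂ`; its remaining `k` points range over `ℂ^k`, of real dimension
`2k = n - 1`. For each of the finitely many ways of choosing which points form which of the `n`
angles, the angles are a function on `ℂ^k` that is differentiable wherever all of them lie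
strictly between `0` and `π` (where `arccos` is differentiable), and a differentiable map into
`ℝ^n` from a space of smaller dimension has a null image.
-/

open EuclideanGeometry

open MeasureTheory Module Real Set

theorem addHaar_image_eq_zero_of_finrank_lt {E F : Type*}
    [NormedAddCommGroup E] [NormedSpace ℝ E] [FiniteDimensional ℝ E]
    [NormedAddCommGroup F] [NormedSpace ℝ F] [FiniteDimensional ℝ F]
    [MeasurableSpace F] [BorelSpace F] (μ : Measure F) [μ.IsAddHaarMeasure]
    (hEF : finrank ℝ E < finrank ℝ F) {f : E → F} {s : Set E} (hf : DifferentiableOn ℝ f s) :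
    μ (f '' s) = 0 := by
  obtain ⟨ι, hι⟩ := (finrank_le_iff_exists_linearMap (R := ℝ) (M := E) (M' := F)).1 hEF.le
  obtain ⟨ρ, hρι⟩ := ι.exists_leftInverse_of_injective (LinearMap.ker_eq_bot.2 hι)
  have hρι' (x : E) : ρ (ι x) = x := LinearMap.congr_fun hρι x
  have hrange : LinearMap.range ι ≠ ⊤ := fun h => by
    have := LinearMap.finrank_range_of_inj hι
    rw [h, finrank_top] at this
    omega
  have himage : f '' s = (f ∘ ρ) '' (ι '' s) := by
    rw [Set.image_image]
    simp only [Function.comp_apply, hρι']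
  rw [himage]
  refine addHaar_image_eq_zero_of_differentiableOn_of_addHaar_eq_zero μ ?_
    (measure_mono_null (Set.image_subset_range _ _) (Measure.addHaar_submodule μ _ hrange))
  rintro _ ⟨x, hx, rfl⟩
  refine DifferentiableWithinAt.comp (ι x) (by rw [hρι']; exact hf x hx)
    (LinearMap.toContinuousLinearMap ρ).differentiableWithinAt ?_
  rintro _ ⟨y, hy, rfl⟩
  simpa [hρι'] using hy

theorem DifferentiableAt.angle {E F : Type*} [NormedAddCommGroup E] [NormedSpace ℝ E]
    [NormedAddCommGroup F] [InnerProductSpace ℝ F] {u v : E → F} {x : E}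
    (hu : DifferentiableAt ℝ u x) (hv : DifferentiableAt ℝ v x) (hu0 : u x ≠ 0) (hv0 : v x ≠ 0)
    (h0 : InnerProductGeometry.angle (u x) (v x) ≠ 0)
    (hπ : InnerProductGeometry.angle (u x) (v x) ≠ π) :
    DifferentiableAt ℝ (fun y => InnerProductGeometry.angle (u y) (v y)) x := by
  unfold InnerProductGeometry.angle at h0 hπ ⊢
  rw [Ne, arccos_eq_zero, not_le] at h0
  rw [Ne, arccos_eq_pi, not_le] at hπ
  refine DifferentiableAt.comp (g := arccos) x (differentiableAt_arccos.2 ⟨hπ.ne', h0.ne⟩) ?_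
  have hnorm : DifferentiableAt ℝ (fun y => ‖u y‖ * ‖v y‖) x :=
    (hu.norm ℝ hu0).mul (hv.norm ℝ hv0)
  have hnorm0 : ‖u x‖ * ‖v x‖ ≠ 0 := mul_ne_zero (norm_ne_zero_iff.2 hu0) (norm_ne_zero_iff.2 hv0)
  simp only [div_eq_mul_inv]
  exact (hu.inner ℝ hv).mul (hnorm.inv hnorm0)

theorem angle_mul_linearIsometryEquiv_add {V : Type*} [NormedAddCommGroup V]
    [InnerProductSpace ℝ V] (J : V ≃ₗᵢ[ℝ] ℂ) {c : ℂ} (hc : c ≠ 0) (d : ℂ) (x y w : V) :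
    ∠ (c * J x + d) (c * J y + d) (c * J w + d) = ∠ x y w := by
  have hsub (p q : V) : c * J p + d -ᵥ (c * J q + d) = c * J (p -ᵥ q) := by
    rw [vsub_eq_sub, vsub_eq_sub, map_sub]; ring
  rw [EuclideanGeometry.angle, EuclideanGeometry.angle, hsub, hsub, Complex.angle_mul_left hc]
  exact J.toLinearIsometry.angle_map _ _

variable {k : ℕ}

def normalizedConfig (z : Fin k → ℂ) : Fin (k + 2) → ℂ := Fin.cons 0 (Fin.cons 1 z)

theorem differentiable_normalizedConfig (j : Fin (k + 2)) :
    Differentiable ℝ fun z : Fin k → ℂ => normalizedConfig z j := by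
  induction j using Fin.cases with
  | zero => exact differentiable_const _
  | succ j =>
    induction j using Fin.cases with
    | zero => exact differentiable_const _
    | succ j => exact differentiable_apply j

theorem exists_normalizedConfig (P : Finset (EuclideanSpace ℝ (Fin 2))) (hP : P.card = k + 2) :
    ∃ (φ : EuclideanSpace ℝ (Fin 2) → ℂ) (z : Fin k → ℂ), Function.Injective φ ∧
      (∀ x y w, ∠ (φ x) (φ y) (φ w) = ∠ x y w) ∧ ∀ p ∈ P, ∃ j, φ p = normalizedConfig z j := by
  let J := Complex.orthonormalBasisOneI.repr.symm
  let e : Fin (k + 2) ≃ P := (P.equivFinOfCardEq hP).symm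
  let q : Fin (k + 2) → ℂ := fun j => J (e j)
  have hq : q 1 - q 0 ≠ 0 := sub_ne_zero.2 fun h => by
    simpa [Fin.ext_iff] using e.injective (Subtype.ext (J.injective h))
  let c := (q 1 - q 0)⁻¹
  -- the similarity sending the first two points of `P` to `0` and `1`
  let φ : EuclideanSpace ℝ (Fin 2) → ℂ := fun x => c * J x + -c * q 0
  have hφe (j : Fin (k + 2)) :
      φ (e j) = normalizedConfig (fun l => φ (e l.succ.succ)) j := by
    induction j using Fin.cases with
    | zero => simp [φ, normalizedConfig, q]
    | succ j =>
      induction j using Fin.cases with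
      | zero =>
        change c * q 1 + -c * q 0 = 1
        rw [neg_mul, ← sub_eq_add_neg, ← mul_sub]
        exact inv_mul_cancel₀ hq
      | succ j => rfl
  refine ⟨φ, fun l => φ (e l.succ.succ), ?_,
    angle_mul_linearIsometryEquiv_add J (inv_ne_zero hq) _, ?_⟩
  · intro x y h
    exact J.injective (mul_left_cancel₀ (inv_ne_zero hq) (add_right_cancel h))
  · intro p hp
    exact ⟨e.symm ⟨p, hp⟩, by simpa using hφe (e.symm ⟨p, hp⟩)⟩

variable {ι : Type*}

noncomputable def configAngles (a b c : ι → Fin (k + 2)) (z : Fin k → ℂ) : ι → ℝ :=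
  fun i => ∠ (normalizedConfig z (a i)) (normalizedConfig z (b i)) (normalizedConfig z (c i))

theorem differentiableAt_configAngles {a b c : ι → Fin (k + 2)} {z : Fin k → ℂ}
    (hab : ∀ i, normalizedConfig z (a i) ≠ normalizedConfig z (b i))
    (hcb : ∀ i, normalizedConfig z (c i) ≠ normalizedConfig z (b i))
    (hθ : ∀ i, configAngles a b c z i ∈ Ioo 0 π) :
    DifferentiableAt ℝ (configAngles a b c) z := by
  refine differentiableAt_pi.2 fun i => ?_
  have hsub (j : Fin (k + 2)) : DifferentiableAt ℝ
      (fun z : Fin k → ℂ => normalizedConfig z j -ᵥ normalizedConfig z (b i)) z :=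
    ((differentiable_normalizedConfig j).sub (differentiable_normalizedConfig (b i))) z
  exact (hsub (a i)).angle (hsub (c i)) (vsub_ne_zero.2 (hab i)) (vsub_ne_zero.2 (hcb i))
    (hθ i).1.ne' (hθ i).2.ne

theorem volume_configAngles_image_eq_zero [Fintype ι] (hk : 2 * k < Fintype.card ι)
    (a b c : ι → Fin (k + 2)) :
    volume (configAngles a b c '' {z | DifferentiableAt ℝ (configAngles a b c) z}) = 0 :=
  addHaar_image_eq_zero_of_finrank_lt volume
    (by simpa [Module.finrank_pi_fintype, mul_comm] using hk)
    fun _ hz => hz.differentiableWithinAt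

theorem exists_configAngles_eq {θ : ι → ℝ} (hθ : ∀ i, θ i ∈ Ioo 0 π)
    {P : Finset (EuclideanSpace ℝ (Fin 2))} (hP : P.card = k + 2)
    (hreal : ∀ i, Realises (P : Set (EuclideanSpace ℝ (Fin 2))) (θ i)) :
    ∃ (a b c : ι → Fin (k + 2)) (z : Fin k → ℂ),
      DifferentiableAt ℝ (configAngles a b c) z ∧ configAngles a b c z = θ := by
  obtain ⟨φ, z, hφ, hangle, hP⟩ := exists_normalizedConfig P hP
  choose A B C hA hB hC hAB hCB hABC using hreal
  choose a ha using fun i => hP (A i) (hA i)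
  choose b hb using fun i => hP (B i) (hB i)
  choose c hc using fun i => hP (C i) (hC i)
  have hconfig : configAngles a b c z = θ := funext fun i => by
    rw [configAngles, ← ha, ← hb, ← hc, hangle, hABC]
  refine ⟨a, b, c, z, differentiableAt_configAngles ?_ ?_ (hconfig ▸ hθ), hconfig⟩
  · exact fun i => ha i ▸ hb i ▸ hφ.ne (hAB i)
  · exact fun i => hc i ▸ hb i ▸ hφ.ne (hCB i)

/-- for `m ≥ 2` and `n = 2m-3`, the set of `n`-tuples of angles
in `(0, π)` realisable by `m` points in the plane has Lebesgue measure zero. -/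
theorem statement11 (m n : ℕ) (hm : 2 ≤ m) (hn : n = 2 * m - 3) :
    MeasureTheory.volume
      {θ : Fin n → ℝ | (∀ i, θ i ∈ Set.Ioo 0 Real.pi) ∧
        ∃ P : Finset (EuclideanSpace ℝ (Fin 2)), P.card = m ∧
          ∀ i, Realises (P : Set (EuclideanSpace ℝ (Fin 2))) (θ i)} = 0 := by
  obtain ⟨k, rfl⟩ : ∃ k, m = k + 2 := ⟨m - 2, by omega⟩
  have hk : 2 * k < Fintype.card (Fin n) := by rw [Fintype.card_fin]; omega
  refine measure_mono_null (t := ⋃ (a : Fin n → Fin (k + 2)) (b) (c),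
    configAngles a b c '' {z | DifferentiableAt ℝ (configAngles a b c) z}) ?_ ?_
  · rintro θ ⟨hθ, P, hP, hreal⟩
    obtain ⟨a, b, c, z, hz, rfl⟩ := exists_configAngles_eq hθ hP hreal
    exact mem_iUnion₂.2 ⟨a, b, mem_iUnion.2 ⟨c, z, hz, rfl⟩⟩
  · exact measure_iUnion_null fun a => measure_iUnion_null fun b => measure_iUnion_null fun c =>
      volume_configAngles_image_eq_zero hk a b c
end

section
/- Suppose m ≥ 5 and n = 2m−3. Let S ⊆ [0,π]^n be the set of n-tuples of angles (with all entries strictly between 0 and π) that can be realised by a set of m points in the plane. Then the Hausdorff dimension of S is exactly n−1. -/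
open EuclideanGeometry

/-!
After a similarity moving two of its points to `0` and a fixed unit vector, a configuration of
`k + 2` points is determined by its remaining `k` points, and each realised angle is a `C¹`
function of them as long as it is neither `0` nor `π`. Finitely many choices of the triples
realising the angles thus cover the set by `C¹` images of subsets of `(ℝ²)ᵏ`, so its dimension
is at most `2k = n - 1`.

Conversely, placing the `k` points at the apexes of triangles on the base `0, (1, 0)` with base
angles `uᵢ, vᵢ` realises the tuple `(u, v, π - u₀ - v₀)`. The base angles range over an open
subset of `ℝ²ᵏ`, which the Lipschitz projection forgetting the last angle recovers, so the
dimension is at least `2k`.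
-/

open Real Set
open scoped ENNReal RealInnerProductSpace

theorem contDiffAt_angle {X V : Type*} [NormedAddCommGroup X] [NormedSpace ℝ X]
    [NormedAddCommGroup V] [InnerProductSpace ℝ V] {f g : X → V} {x : X}
    (hf : ContDiffAt ℝ 1 f x) (hg : ContDiffAt ℝ 1 g x) (hf0 : f x ≠ 0) (hg0 : g x ≠ 0)
    (hfg : InnerProductGeometry.angle (f x) (g x) ∈ Ioo 0 π) :
    ContDiffAt ℝ 1 (fun y => InnerProductGeometry.angle (f y) (g y)) x := by
  have hcos : ContDiffAt ℝ 1 (fun y => ⟪f y, g y⟫ / (‖f y‖ * ‖g y‖)) x :=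
    (hf.inner ℝ hg).div ((hf.norm ℝ hf0).mul (hg.norm ℝ hg0)) (by positivity)
  have harccos : ContDiffAt ℝ 1 arccos (⟪f x, g x⟫ / (‖f x‖ * ‖g x‖)) := by
    rw [← InnerProductGeometry.cos_angle]
    refine contDiffAt_arccos ?_ ?_
    · simpa [← cos_pi] using (cos_lt_cos_of_nonneg_of_le_pi hfg.1.le le_rfl hfg.2).ne'
    · simpa [← cos_zero] using (cos_lt_cos_of_nonneg_of_le_pi le_rfl hfg.2.le hfg.1).ne
  exact harccos.comp x hcos

theorem exists_angle_preserving_map_eq_zero_eq {V : Type*} [NormedAddCommGroup V]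
    [InnerProductSpace ℝ V] {p q e : V} (hpq : p ≠ q) (he : ‖e‖ = 1) :
    ∃ σ : V → V, Function.Injective σ ∧ σ p = 0 ∧ σ q = e ∧
      ∀ X Y Z, ∠ (σ X) (σ Y) (σ Z) = ∠ X Y Z := by
  set r := ‖q - p‖
  have hr : r ≠ 0 := norm_ne_zero_iff.2 (sub_ne_zero.2 hpq.symm)
  -- a reflection turns `q - p` into `r • e`; rescaling by `r⁻¹` finishes
  set R := Submodule.reflection (ℝ ∙ ((q - p) - r • e))ᗮ
  have hR : R (q - p) = r • e :=
    Submodule.reflection_sub (by rw [norm_smul, he, mul_one, norm_norm])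
  refine ⟨fun X => r⁻¹ • R (X - p), fun X Y h => ?_, by simp, ?_, fun X Y Z => ?_⟩
  · simpa using (smul_right_injective V (inv_ne_zero hr)) h
  · simp only [hR, smul_smul, inv_mul_cancel₀ hr, one_smul]
  · simp only [EuclideanGeometry.angle, vsub_eq_sub, ← smul_sub, ← map_sub,
      sub_sub_sub_cancel_right]
    rw [InnerProductGeometry.angle_smul_smul (inv_ne_zero hr)]
    exact R.toLinearIsometry.angle_map _ _

theorem dimH_image_le_of_contDiffAt {E F : Type*} [NormedAddCommGroup E] [NormedSpace ℝ E]
    [SecondCountableTopology E] [NormedAddCommGroup F] [NormedSpace ℝ F] {f : E → F}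
    {s : Set E} (hf : ∀ x ∈ s, ContDiffAt ℝ 1 f x) : dimH (f '' s) ≤ dimH s :=
  dimH_image_le_of_locally_lipschitzOn fun x hx =>
    let ⟨C, t, ht, hC⟩ := (hf x hx).exists_lipschitzOnWith
    ⟨C, t, nhdsWithin_le_nhds ht, hC⟩

section Configurations

variable {V : Type*} [NormedAddCommGroup V] [InnerProductSpace ℝ V] {k m n : ℕ}

def normalConfig (e : V) (x : Fin k → V) : Fin (k + 2) → V :=
  Fin.cons 0 (Fin.cons e x)

theorem contDiff_normalConfig (e : V) :
    ContDiff ℝ 1 (normalConfig (k := k) e) := by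
  refine contDiff_pi.2 fun j => ?_
  refine Fin.cases contDiff_const (Fin.cases contDiff_const fun j => ?_) j
  exact contDiff_apply ℝ V j

noncomputable def angleTuple (t : Fin n → Fin m × Fin m × Fin m) (p : Fin m → V) :
    EuclideanSpace ℝ (Fin n) :=
  WithLp.toLp 2 fun i => ∠ (p (t i).1) (p (t i).2.1) (p (t i).2.2)

def nondegenerateConfigs (t : Fin n → Fin m × Fin m × Fin m) : Set (Fin m → V) :=
  {p | ∀ i, p (t i).1 ≠ p (t i).2.1 ∧ p (t i).2.2 ≠ p (t i).2.1 ∧ angleTuple t p i ∈ Ioo 0 π}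

theorem contDiffAt_angleTuple {t : Fin n → Fin m × Fin m × Fin m} {p : Fin m → V}
    (hp : p ∈ nondegenerateConfigs t) : ContDiffAt ℝ 1 (angleTuple t) p := by
  refine (contDiffAt_piLp 2).2 fun i => ?_
  obtain ⟨hab, hcb, hangle⟩ := hp i
  have hsub (a b : Fin m) : ContDiffAt ℝ 1 (fun q : Fin m → V => q a - q b) p :=
    ((contDiff_apply ℝ V a).sub (contDiff_apply ℝ V b)).contDiffAt
  exact contDiffAt_angle (hsub _ _) (hsub _ _) (sub_ne_zero.2 hab) (sub_ne_zero.2 hcb) hangle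

theorem angleTuple_comp {σ : V → V} (hσ : ∀ X Y Z, ∠ (σ X) (σ Y) (σ Z) = ∠ X Y Z)
    (t : Fin n → Fin m × Fin m × Fin m) (p : Fin m → V) :
    angleTuple t (σ ∘ p) = angleTuple t p := by
  simp [angleTuple, hσ]

theorem comp_mem_nondegenerateConfigs {σ : V → V} (hσ : Function.Injective σ)
    (hσ' : ∀ X Y Z, ∠ (σ X) (σ Y) (σ Z) = ∠ X Y Z) {t : Fin n → Fin m × Fin m × Fin m}
    {p : Fin m → V} (hp : p ∈ nondegenerateConfigs t) : σ ∘ p ∈ nondegenerateConfigs t := by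
  intro i
  obtain ⟨hab, hcb, hangle⟩ := hp i
  exact ⟨hσ.ne hab, hσ.ne hcb, by rwa [angleTuple_comp hσ']⟩

end Configurations

def realisableAngles (d n m : ℕ) : Set (EuclideanSpace ℝ (Fin n)) :=
  {θ | (∀ i, θ i ∈ Ioo 0 π) ∧ ∃ P : Finset (EuclideanSpace ℝ (Fin d)), P.card = m ∧
    ∀ i, Realises (P : Set (EuclideanSpace ℝ (Fin d))) (θ i)}

theorem exists_angleTuple_eq_of_mem_realisableAngles {d n m : ℕ}
    {θ : EuclideanSpace ℝ (Fin n)} (hθ : θ ∈ realisableAngles d n m) :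
    ∃ t : Fin n → Fin m × Fin m × Fin m, ∃ p : Fin m → EuclideanSpace ℝ (Fin d),
      Function.Injective p ∧ p ∈ nondegenerateConfigs t ∧ angleTuple t p = θ := by
  obtain ⟨hθ, P, hcard, hP⟩ := hθ
  let f : Fin m ≃ P := (finCongr hcard.symm).trans P.equivFin.symm
  let p : Fin m → EuclideanSpace ℝ (Fin d) := fun j => f j
  have hp_surj : ∀ A ∈ P, ∃ j, p j = A := fun A hA => ⟨f.symm ⟨A, hA⟩, by simp [p]⟩
  have ht : ∀ i, ∃ abc : Fin m × Fin m × Fin m, p abc.1 ≠ p abc.2.1 ∧ p abc.2.2 ≠ p abc.2.1 ∧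
      ∠ (p abc.1) (p abc.2.1) (p abc.2.2) = θ i := by
    intro i
    obtain ⟨A, B, C, hA, hB, hC, hAB, hCB, hABC⟩ := hP i
    obtain ⟨a, rfl⟩ := hp_surj A hA
    obtain ⟨b, rfl⟩ := hp_surj B hB
    obtain ⟨c, rfl⟩ := hp_surj C hC
    exact ⟨(a, b, c), hAB, hCB, hABC⟩
  choose t ht using ht
  have hθt : angleTuple t p = θ := by ext i; exact (ht i).2.2
  exact ⟨t, p, Subtype.val_injective.comp f.injective,
    fun i => ⟨(ht i).1, (ht i).2.1, by rw [hθt]; exact hθ i⟩, hθt⟩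

theorem realisableAngles_subset_iUnion {d n k : ℕ} {e : EuclideanSpace ℝ (Fin d)}
    (he : ‖e‖ = 1) :
    realisableAngles d n (k + 2) ⊆
      ⋃ t, angleTuple t ∘ normalConfig (k := k) e ''
        (normalConfig e ⁻¹' nondegenerateConfigs t) := by
  intro θ hθ
  obtain ⟨t, p, hp, hpt, rfl⟩ := exists_angleTuple_eq_of_mem_realisableAngles hθ
  obtain ⟨σ, hσ, hσ0, hσ1, hσangle⟩ :=
    exists_angle_preserving_map_eq_zero_eq (hp.ne zero_ne_one) he
  have hnormal : normalConfig e (fun j => σ (p j.succ.succ)) = σ ∘ p := by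
    funext j
    refine Fin.cases ?_ (Fin.cases ?_ fun j => ?_) j <;> simp [normalConfig, hσ0, hσ1]
  refine mem_iUnion.2 ⟨t, fun j => σ (p j.succ.succ), ?_, ?_⟩
  · rw [mem_preimage, hnormal]
    exact comp_mem_nondegenerateConfigs hσ hσangle hpt
  · rw [Function.comp_apply, hnormal, angleTuple_comp hσangle]

theorem dimH_realisableAngles_le (d n k : ℕ) [NeZero d] :
    dimH (realisableAngles d n (k + 2)) ≤ (k * d : ℕ) := by
  set e : EuclideanSpace ℝ (Fin d) := EuclideanSpace.single 0 1
  calc dimH (realisableAngles d n (k + 2))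
      ≤ ⨆ t : Fin n → Fin (k + 2) × Fin (k + 2) × Fin (k + 2),
          dimH (angleTuple t ∘ normalConfig e '' (normalConfig e ⁻¹' nondegenerateConfigs t)) :=
        (dimH_mono (realisableAngles_subset_iUnion (by simp [e]))).trans (dimH_iUnion _).le
    _ ≤ dimH (univ : Set (Fin k → EuclideanSpace ℝ (Fin d))) := by
        refine iSup_le fun t => (dimH_image_le_of_contDiffAt fun x hx => ?_).trans
          (dimH_mono (subset_univ _))
        exact (contDiffAt_angleTuple hx).comp x (contDiff_normalConfig e).contDiffAt
    _ = (k * d : ℕ) := by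
        rw [Real.dimH_univ_eq_finrank, Module.finrank_pi_fintype]
        simp

section Triangle

noncomputable def polar (r γ : ℝ) : EuclideanSpace ℝ (Fin 2) :=
  !₂[r * cos γ, r * sin γ]

theorem norm_polar {r : ℝ} (hr : 0 ≤ r) (γ : ℝ) : ‖polar r γ‖ = r := by
  rw [EuclideanSpace.norm_eq, Fin.sum_univ_two]
  simp only [polar, PiLp.toLp_apply, Matrix.cons_val_zero, Matrix.cons_val_one,
    Real.norm_eq_abs, sq_abs, mul_pow]
  rw [← mul_add, cos_sq_add_sin_sq, mul_one, sqrt_sq hr]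

theorem inner_polar (r s γ δ : ℝ) : ⟪polar r γ, polar s δ⟫ = r * s * cos (γ - δ) := by
  simp only [polar, PiLp.inner_apply, Fin.sum_univ_two, Matrix.cons_val_zero,
    Matrix.cons_val_one, RCLike.inner_apply, conj_trivial, cos_sub]
  ring

theorem angle_polar_polar {r s γ δ : ℝ} (hr : 0 < r) (hs : 0 < s) (hδγ : δ ≤ γ)
    (hγδ : γ - δ ≤ π) : InnerProductGeometry.angle (polar r γ) (polar s δ) = γ - δ := by
  rw [InnerProductGeometry.angle, inner_polar, norm_polar hr.le, norm_polar hs.le,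
    mul_div_cancel_left₀ _ (by positivity), arccos_cos (by linarith) hγδ]

theorem polar_one_zero_ne_zero : polar 1 0 ≠ 0 := fun h => by
  simpa [polar] using congrArg (· 0) h

/-- The apex of the triangle on the base `0`, `polar 1 0` with base angles `u` and `v`;
its distance `sin v / sin (u + v)` from `0` comes from the law of sines. -/
noncomputable def apex (u v : ℝ) : EuclideanSpace ℝ (Fin 2) :=
  polar (sin v / sin (u + v)) u

variable {u v : ℝ} (hu : 0 < u) (hv : 0 < v) (huv : u + v < π)
include hu hv huv

theorem apex_apply_one_pos : 0 < apex u v 1 := by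
  have := sin_pos_of_pos_of_lt_pi hu (by linarith)
  have := sin_pos_of_pos_of_lt_pi hv (by linarith)
  have := sin_pos_of_pos_of_lt_pi (by linarith : 0 < u + v) huv
  simp only [apex, polar, PiLp.toLp_apply, Matrix.cons_val_one, Matrix.cons_val_zero]
  positivity

theorem apex_ne_zero : apex u v ≠ 0 := fun h => by
  simpa [h] using apex_apply_one_pos hu hv huv

theorem apex_ne_polar_one_zero : apex u v ≠ polar 1 0 := fun h => by
  simpa [h, polar] using apex_apply_one_pos hu hv huv

theorem angle_apex_zero_polar : ∠ (apex u v) 0 (polar 1 0) = u := by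
  have := sin_pos_of_pos_of_lt_pi hv (by linarith)
  have := sin_pos_of_pos_of_lt_pi (by linarith : 0 < u + v) huv
  rw [EuclideanGeometry.angle, vsub_eq_sub, vsub_eq_sub, sub_zero, sub_zero, apex,
    angle_polar_polar (by positivity) one_pos hu.le (by linarith), sub_zero]

theorem angle_apex_polar_zero : ∠ (apex u v) (polar 1 0) 0 = v := by
  have := sin_pos_of_pos_of_lt_pi hu (by linarith)
  have hsin := sin_pos_of_pos_of_lt_pi (by linarith : 0 < u + v) huv
  have h0 : (0 : EuclideanSpace ℝ (Fin 2)) - polar 1 0 = polar 1 π := by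
    ext i; fin_cases i <;> simp [polar]
  have happex : apex u v - polar 1 0 = polar (sin u / sin (u + v)) (π - v) := by
    have hcos : sin v / sin (u + v) * cos u - 1 = sin u / sin (u + v) * cos (π - v) := by
      rw [cos_pi_sub]
      field_simp
      linear_combination -sin_add u v
    have hsin : sin v / sin (u + v) * sin u = sin u / sin (u + v) * sin (π - v) := by
      rw [sin_pi_sub]
      ring
    ext i
    fin_cases i
    · simpa [apex, polar] using hcos
    · simpa [apex, polar] using hsin
  rw [EuclideanGeometry.angle, vsub_eq_sub, vsub_eq_sub, happex, h0,
    InnerProductGeometry.angle_comm,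
    angle_polar_polar one_pos (by positivity) (by linarith) (by linarith)]
  ring

theorem angle_zero_apex_polar : ∠ 0 (apex u v) (polar 1 0) = π - u - v := by
  have := EuclideanGeometry.angle_add_angle_add_angle_eq_pi (polar 1 0) (apex_ne_zero hu hv huv)
  rw [angle_apex_polar_zero hu hv huv, EuclideanGeometry.angle_comm (polar 1 0),
    angle_apex_zero_polar hu hv huv] at this
  linarith

end Triangle

theorem injective_normalConfig_apex {k : ℕ} {u v : Fin k → ℝ} (hu_inj : Function.Injective u)
    (hu : ∀ i, 0 < u i) (hv : ∀ i, 0 < v i) (huv : ∀ i, u i + v i < π) :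
    Function.Injective (normalConfig (polar 1 0) fun i => apex (u i) (v i)) := by
  have hapex_inj : Function.Injective fun i => apex (u i) (v i) := fun i j h => hu_inj <| by
    rw [← angle_apex_zero_polar (hu i) (hv i) (huv i),
      ← angle_apex_zero_polar (hu j) (hv j) (huv j)]
    exact congrArg (∠ · 0 (polar 1 0)) h
  simp only [normalConfig, Fin.cons_injective_iff, Fin.range_cons, mem_insert_iff, mem_range,
    not_or, not_exists]
  exact ⟨⟨polar_one_zero_ne_zero.symm, fun i => apex_ne_zero (hu i) (hv i) (huv i)⟩,
    fun i => apex_ne_polar_one_zero (hu i) (hv i) (huv i), hapex_inj⟩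

theorem toLp_snoc_append_mem_realisableAngles {k : ℕ} {u v : Fin k → ℝ}
    (hu_inj : Function.Injective u) (hu : ∀ i, 0 < u i) (hv : ∀ i, 0 < v i)
    (huv : ∀ i, u i + v i < π) (i₀ : Fin k) :
    WithLp.toLp 2 (Fin.snoc (Fin.append u v) (π - u i₀ - v i₀) : Fin (k + k + 1) → ℝ) ∈
      realisableAngles 2 (k + k + 1) (k + 2) := by
  set Q : Fin k → EuclideanSpace ℝ (Fin 2) := fun i => apex (u i) (v i)
  set p := normalConfig (polar 1 0) Q
  set P := Finset.univ.image p
  have hP (j : Fin (k + 2)) : p j ∈ (P : Set (EuclideanSpace ℝ (Fin 2))) :=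
    Finset.mem_coe.2 (Finset.mem_image_of_mem p (Finset.mem_univ j))
  set θ : Fin (k + k + 1) → ℝ := Fin.snoc (Fin.append u v) (π - u i₀ - v i₀)
  have key (j : Fin (k + k + 1)) :
      θ j ∈ Ioo 0 π ∧ Realises (P : Set (EuclideanSpace ℝ (Fin 2))) (θ j) := by
    induction j using Fin.lastCases with
    | last =>
      simp only [θ, Fin.snoc_last]
      exact ⟨⟨by linarith [huv i₀], by linarith [hu i₀, hv i₀]⟩,
        0, Q i₀, polar 1 0, hP 0, hP i₀.succ.succ, hP 1,
        (apex_ne_zero (hu i₀) (hv i₀) (huv i₀)).symm,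
        (apex_ne_polar_one_zero (hu i₀) (hv i₀) (huv i₀)).symm,
        angle_zero_apex_polar (hu i₀) (hv i₀) (huv i₀)⟩
    | cast j =>
      simp only [θ, Fin.snoc_castSucc]
      induction j using Fin.addCases with
      | left i =>
        rw [Fin.append_left]
        exact ⟨⟨hu i, by linarith [huv i, hv i]⟩,
          Q i, 0, polar 1 0, hP i.succ.succ, hP 0, hP 1,
          apex_ne_zero (hu i) (hv i) (huv i), polar_one_zero_ne_zero,
          angle_apex_zero_polar (hu i) (hv i) (huv i)⟩
      | right i =>
        rw [Fin.append_right]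
        exact ⟨⟨hv i, by linarith [huv i, hu i]⟩,
          Q i, polar 1 0, 0, hP i.succ.succ, hP 1, hP 0,
          apex_ne_polar_one_zero (hu i) (hv i) (huv i), polar_one_zero_ne_zero.symm,
          angle_apex_polar_zero (hu i) (hv i) (huv i)⟩
  refine ⟨fun j => (key j).1, P, ?_, fun j => (key j).2⟩
  rw [Finset.card_image_of_injective _ (injective_normalConfig_apex hu_inj hu hv huv),
    Finset.card_univ, Fintype.card_fin]

theorem le_dimH_realisableAngles {k : ℕ} (hk : 0 < k) :
    ((k + k : ℕ) : ℝ≥0∞) ≤ dimH (realisableAngles 2 (k + k + 1) (k + 2)) := by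
  -- the `u`-coordinates range over disjoint intervals, so the apexes are distinct
  let I : Fin (k + k) → Set ℝ :=
    Fin.append (fun i : Fin k => Ioo ((i : ℝ) / k) ((i + 1) / k)) fun _ => Ioo 0 1
  have hI (j : Fin (k + k)) : IsOpen (I j) ∧ (I j).Nonempty := by
    induction j using Fin.addCases with
    | left i =>
      simp only [I, Fin.append_left]
      exact ⟨isOpen_Ioo, nonempty_Ioo.2 (by gcongr; linarith)⟩
    | right i =>
      simp only [I, Fin.append_right]
      exact ⟨isOpen_Ioo, nonempty_Ioo.2 one_pos⟩
  let proj : EuclideanSpace ℝ (Fin (k + k + 1)) →L[ℝ] Fin (k + k) → ℝ :=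
    ContinuousLinearMap.pi fun j => EuclideanSpace.proj j.castSucc
  have hbox : univ.pi I ⊆ proj '' realisableAngles 2 (k + k + 1) (k + 2) := by
    intro w hw
    set u : Fin k → ℝ := fun i => w (Fin.castAdd k i)
    set v : Fin k → ℝ := fun i => w (Fin.natAdd k i)
    have hu (i : Fin k) : u i ∈ Ioo ((i : ℝ) / k) ((i + 1) / k) := by
      simpa only [I, Fin.append_left] using hw _ (mem_univ (Fin.castAdd k i))
    have hv (i : Fin k) : v i ∈ Ioo 0 1 := by
      simpa only [I, Fin.append_right] using hw _ (mem_univ (Fin.natAdd k i))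
    have hu_mono : StrictMono u := fun i j hij => calc
      u i < (i + 1) / k := (hu i).2
      _ ≤ j / k := by gcongr; exact_mod_cast hij
      _ < u j := (hu j).1
    have hu_lt_one (i : Fin k) : u i < 1 := calc
      u i < (i + 1) / k := (hu i).2
      _ ≤ 1 := by rw [div_le_one (by positivity)]; exact_mod_cast i.2
    refine ⟨_, toLp_snoc_append_mem_realisableAngles hu_mono.injective
      (fun i => (div_nonneg (Nat.cast_nonneg _) (Nat.cast_nonneg _)).trans_lt (hu i).1)
      (fun i => (hv i).1) (fun i => by linarith [pi_gt_three, hu_lt_one i, (hv i).2]) ⟨0, hk⟩, ?_⟩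
    ext j
    simp only [proj, ContinuousLinearMap.pi_apply, EuclideanSpace.coe_proj,
      Fin.snoc_castSucc]
    exact congrFun Fin.append_castAdd_natAdd j
  calc ((k + k : ℕ) : ℝ≥0∞) = dimH (univ.pi I) := by
        rw [Real.dimH_of_nonempty_interior ?_, Module.finrank_fin_fun]
        rw [(isOpen_set_pi finite_univ fun j _ => (hI j).1).interior_eq]
        exact univ_pi_nonempty_iff.2 fun j => (hI j).2
    _ ≤ dimH (proj '' realisableAngles 2 (k + k + 1) (k + 2)) := dimH_mono hbox
    _ ≤ dimH (realisableAngles 2 (k + k + 1) (k + 2)) := proj.lipschitz.dimH_image_le _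

/-- for `m ≥ 5` and `n = 2m-3`, the set of `n`-tuples of angles
in `(0, π)` realisable by `m` points in the plane has Hausdorff dimension
exactly `n - 1`. -/
theorem statement12 (m n : ℕ) (hm : 5 ≤ m) (hn : n = 2 * m - 3) :
    dimH {θ : EuclideanSpace ℝ (Fin n) | (∀ i, θ i ∈ Set.Ioo 0 Real.pi) ∧
        ∃ P : Finset (EuclideanSpace ℝ (Fin 2)), P.card = m ∧
          ∀ i, Realises (P : Set (EuclideanSpace ℝ (Fin 2))) (θ i)} = (n - 1 : ℕ) := by
  obtain ⟨k, rfl⟩ : ∃ k, m = k + 2 := ⟨m - 2, by omega⟩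
  obtain rfl : n = k + k + 1 := by omega
  change dimH (realisableAngles 2 (k + k + 1) (k + 2)) = _
  rw [show k + k + 1 - 1 = k * 2 by omega]
  exact le_antisymm (dimH_realisableAngles_le 2 _ k)
    ((show k + k = k * 2 by omega) ▸ le_dimH_realisableAngles (by omega))
end

section
/- Let d ≥ 1 and let v be a random unit vector distributed according to the uniform (normalized surface) probability measure on the unit sphere of ℝ^d. Then for every ε > 0, the probability that |v₁| < ε (where v₁ is the first coordinate of v) is at most √ε + dε. Equivalently, for a fixed unit vector v in ℝ^d and the orthogonal projection p onto a uniformly chosen one-dimensional subspace, the probability that ‖p(v)‖ < ε is at most √ε + dε. -/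
open MeasureTheory
open scoped ENNReal NNReal

open Metric Set

/-- The measure (in `ℝ^{m+1}`) of the set of points whose first coordinate is
less than `α` in absolute value and whose remaining coordinates have sum of
squares `< r^2`, as a product. -/
private lemma slab_volume (m : ℕ) (α r : ℝ) (hr : 0 < r) :
    (volume : Measure (EuclideanSpace ℝ (Fin (m + 1))))
      {x : EuclideanSpace ℝ (Fin (m + 1)) |
        |x 0| < α ∧ ∑ j : Fin m, (x j.succ) ^ 2 < r ^ 2}
    = ENNReal.ofReal (2 * α) *
        (volume : Measure (EuclideanSpace ℝ (Fin m))) (ball 0 r) := by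
  set e1 := (MeasurableEquiv.toLp 2 (Fin (m + 1) → ℝ)).symm
  set e2 := MeasurableEquiv.piFinSuccAbove (fun _ : Fin (m + 1) => ℝ) 0
  set Φ := (MeasurableEquiv.toLp 2 (Fin m → ℝ)).symm.symm
  have hset : {x : EuclideanSpace ℝ (Fin (m + 1)) |
        |x 0| < α ∧ ∑ j : Fin m, (x j.succ) ^ 2 < r ^ 2}
      = (fun x => e2 (e1 x)) ⁻¹' (Ioo (-α) α ×ˢ (Φ ⁻¹' ball 0 r)) := by
    ext x
    have h2 : Φ (e2 (e1 x)).2 ∈ ball (0 : EuclideanSpace ℝ (Fin m)) r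
        ↔ ∑ j : Fin m, (x j.succ) ^ 2 < r ^ 2 := by
      rw [mem_ball_zero_iff, EuclideanSpace.norm_eq, Real.sqrt_lt' hr]
      have : ∀ j : Fin m, ‖Φ (e2 (e1 x)).2 j‖ ^ 2 = (x j.succ) ^ 2 := by
        intro j
        have : Φ (e2 (e1 x)).2 j = x ((0 : Fin (m+1)).succAbove j) := rfl
        rw [this, Fin.zero_succAbove, Real.norm_eq_abs, sq_abs]
      rw [Finset.sum_congr rfl fun j _ => this j]
    simp only [Set.mem_setOf_eq, Set.mem_preimage, Set.mem_prod, Set.mem_Ioo, h2]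
    constructor
    · rintro ⟨h1, hs⟩; exact ⟨abs_lt.1 h1, hs⟩
    · rintro ⟨h1, hs⟩; exact ⟨abs_lt.2 h1, hs⟩
  have hmp : MeasurePreserving (fun x => e2 (e1 x))
      (volume : Measure (EuclideanSpace ℝ (Fin (m + 1))))
      (volume : Measure (ℝ × (Fin m → ℝ))) :=
    (volume_preserving_piFinSuccAbove (fun _ : Fin (m + 1) => ℝ) 0).comp
      (EuclideanSpace.volume_preserving_symm_measurableEquiv_toLp (Fin (m + 1)))
  have hms : MeasurableSet (Ioo (-α) α ×ˢ (Φ ⁻¹' ball (0 : EuclideanSpace ℝ (Fin m)) r)) :=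
    measurableSet_Ioo.prod (Φ.measurable measurableSet_ball)
  have hΦ : (volume : Measure (Fin m → ℝ)) (Φ ⁻¹' ball 0 r)
      = (volume : Measure (EuclideanSpace ℝ (Fin m))) (ball 0 r) :=
    ((EuclideanSpace.volume_preserving_symm_measurableEquiv_toLp (Fin m)).symm
      (MeasurableEquiv.toLp 2 (Fin m → ℝ)).symm).measure_preimage
      measurableSet_ball.nullMeasurableSet
  rw [hset, hmp.measure_preimage hms.nullMeasurableSet, Measure.volume_eq_prod,
    Measure.prod_prod, Real.volume_Ioo, hΦ, show α - -α = 2 * α by ring]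

private lemma real_ineq (d m : ℕ) (hdm : d = m + 1) (ε : ℝ) (hε : 0 < ε)
    (h1 : Real.sqrt ε + d * ε ≤ 1) :
    Real.sqrt ε ≤ (Real.sqrt ε + d * ε) * Real.sqrt (1 - ε) ^ m := by
  have hdc : (d : ℝ) = m + 1 := by rw [hdm]; push_cast; ring
  have hd1 : (1 : ℝ) ≤ d := by
    rw [hdc]
    have := (Nat.cast_nonneg m : (0:ℝ) ≤ m)
    linarith
  have hs : Real.sqrt ε ^ 2 = ε := Real.sq_sqrt hε.le
  have hsnn : 0 ≤ Real.sqrt ε := Real.sqrt_nonneg ε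
  have hdε0 : 0 < d * ε := by positivity
  have hdε : d * ε < 1 := by nlinarith [Real.sqrt_pos.2 hε]
  have hε1 : ε < 1 := by nlinarith
  have h1ε : 0 < 1 - ε := by linarith
  set y := ε / (1 - ε) with hy
  have hy0 : 0 ≤ y := by positivity
  have hexp : Real.exp (-y) ≤ 1 - ε := by
    have h3 : 1 ≤ (1 - ε) * Real.exp y := by
      have he : (1 - ε) * (y + 1) = 1 := by rw [hy]; field_simp; ring
      nlinarith [Real.add_one_le_exp y]
    have h5 : Real.exp (-y) * Real.exp y = 1 := by
      rw [← Real.exp_add, neg_add_cancel, Real.exp_zero]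
    nlinarith [Real.exp_pos y]
  have hexp2 : Real.exp (-y / 2) ≤ Real.sqrt (1 - ε) := by
    rw [Real.le_sqrt' (Real.exp_pos _)]
    have : Real.exp (-y / 2) ^ 2 = Real.exp (-y) := by
      rw [← Real.exp_nat_mul]
      congr 1
      push_cast
      ring
    rw [this]; exact hexp
  have hexp3 : Real.exp (-((m : ℝ) * y) / 2) ≤ Real.sqrt (1 - ε) ^ m := by
    calc Real.exp (-((m : ℝ) * y) / 2) = Real.exp (-y / 2) ^ m := by
          rw [← Real.exp_nat_mul]
          congr 1
          ring
      _ ≤ Real.sqrt (1 - ε) ^ m := pow_le_pow_left₀ (Real.exp_pos _).le hexp2 m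
  have hmy : (m : ℝ) * y ≤ d * ε := by
    rw [hy, show (m : ℝ) * (ε / (1 - ε)) = (m * ε) / (1 - ε) by ring, div_le_iff₀ h1ε]
    nlinarith
  have hlb : 1 - d * ε / 2 ≤ Real.sqrt (1 - ε) ^ m := by
    calc 1 - d * ε / 2 ≤ Real.exp (-(d * ε) / 2) := by
          nlinarith [Real.add_one_le_exp (-(d * ε) / 2)]
      _ ≤ Real.exp (-((m : ℝ) * y) / 2) := Real.exp_le_exp.2 (by linarith)
      _ ≤ _ := hexp3
  have hnn : (0:ℝ) ≤ Real.sqrt ε + d * ε := by positivity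
  nlinarith [mul_le_mul_of_nonneg_left hlb hnn]

private lemma ennreal_aux (k B : ℝ≥0∞) (hk0 : k ≠ 0) (hk : k ≠ ⊤) (hB0 : B ≠ 0) (hB : B ≠ ⊤)
    {p q s : ℝ} (hq : 0 < q) (hs : 0 ≤ s) (h : p ≤ s * q) :
    (k * (ENNReal.ofReal q * B))⁻¹ * (k * (ENNReal.ofReal p * B)) ≤ ENNReal.ofReal s := by
  have hq0 : ENNReal.ofReal q ≠ 0 := (ENNReal.ofReal_pos.2 hq).ne'
  have hD0 : k * (ENNReal.ofReal q * B) ≠ 0 := by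
    simp [hk0, hq0, hB0]
  have hDt : k * (ENNReal.ofReal q * B) ≠ ⊤ := by
    simp [ENNReal.mul_ne_top, hk, hB, ENNReal.ofReal_ne_top]
  rw [ENNReal.inv_mul_le_iff hD0 hDt]
  have heq : k * (ENNReal.ofReal q * B) * ENNReal.ofReal s
      = k * ((ENNReal.ofReal s * ENNReal.ofReal q) * B) := by ring
  rw [heq, ← ENNReal.ofReal_mul hs]
  gcongr

/-- for a uniformly random unit vector `v` on the unit sphere of
`ℝ^d` (i.e. under the normalized rotation-invariant surface probability
measure), the probability that the absolute value of the first coordinate of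
`v` is less than `ε` is at most `√ε + dε`. -/
theorem statement14 (d : ℕ) (hd : 1 ≤ d) (ε : ℝ) (hε : 0 < ε) :
    ((((volume : Measure (EuclideanSpace ℝ (Fin d))).toSphere Set.univ)⁻¹ •
        (volume : Measure (EuclideanSpace ℝ (Fin d))).toSphere)
      {v : Metric.sphere (0 : EuclideanSpace ℝ (Fin d)) 1 |
        |(v : EuclideanSpace ℝ (Fin d)) ⟨0, hd⟩| < ε})
      ≤ ENNReal.ofReal (Real.sqrt ε + d * ε) := by
  obtain ⟨m, rfl⟩ : ∃ m, d = m + 1 := ⟨d - 1, (Nat.succ_pred_eq_of_pos hd).symm⟩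
  set μd := (volume : Measure (EuclideanSpace ℝ (Fin (m + 1)))) with hμd
  set S : Set (Metric.sphere (0 : EuclideanSpace ℝ (Fin (m + 1))) 1) :=
    {v : Metric.sphere (0 : EuclideanSpace ℝ (Fin (m + 1))) 1 |
      |(v : EuclideanSpace ℝ (Fin (m + 1))) ⟨0, hd⟩| < ε} with hS
  rw [Measure.smul_apply, smul_eq_mul]
  rcases le_or_gt (Real.sqrt ε + (m + 1 : ℕ) * ε) 1 with hcase | hcase
  swap
  · -- trivial case : the bound exceeds 1
    calc (μd.toSphere Set.univ)⁻¹ * μd.toSphere S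
        ≤ (μd.toSphere Set.univ)⁻¹ * μd.toSphere Set.univ :=
          mul_le_mul_right (measure_mono (Set.subset_univ _)) _
      _ ≤ 1 := ENNReal.inv_mul_le_one _
      _ ≤ ENNReal.ofReal (Real.sqrt ε + (m + 1 : ℕ) * ε) := ENNReal.one_le_ofReal.2 hcase.le
  -- main case
  have hε1 : ε < 1 := by
    by_contra hcon
    push_neg at hcon
    have : (1 : ℝ) ≤ Real.sqrt ε := by
      rw [show (1:ℝ) = Real.sqrt 1 by simp]
      exact Real.sqrt_le_sqrt hcon
    have : (1 : ℝ) ≤ ((m : ℝ) + 1) * ε := by nlinarith [Nat.cast_nonneg (α := ℝ) m]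
    push_cast at hcase
    nlinarith [Real.sqrt_nonneg ε]
  have h1ε : 0 < 1 - ε := by linarith
  set a := Real.sqrt ε with ha
  set c := Real.sqrt (1 - ε) with hc
  have ha0 : 0 < a := Real.sqrt_pos.2 hε
  have hc0 : 0 < c := Real.sqrt_pos.2 h1ε
  set Bm := (volume : Measure (EuclideanSpace ℝ (Fin m))) (Metric.ball 0 1) with hBm
  have hBm0 : Bm ≠ 0 := (measure_ball_pos _ _ one_pos).ne'
  have hBmt : Bm ≠ ⊤ := measure_ball_lt_top.ne
  have hSmeas : MeasurableSet S := by
    have hco : Measurable fun v : Metric.sphere (0 : EuclideanSpace ℝ (Fin (m + 1))) 1 =>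
        (v : EuclideanSpace ℝ (Fin (m + 1))) ⟨0, hd⟩ := by
      exact (measurable_pi_apply (⟨0, hd⟩ : Fin (m+1))).comp
        ((MeasurableEquiv.toLp 2 (Fin (m+1) → ℝ)).symm.measurable.comp measurable_subtype_coe)
    exact measurableSet_lt hco.abs measurable_const
  -- the norm-squared identity
  have hnormsq : ∀ x : EuclideanSpace ℝ (Fin (m + 1)),
      ∑ i : Fin (m + 1), (x i) ^ 2 = ‖x‖ ^ 2 := by
    intro x
    rw [EuclideanSpace.norm_eq, Real.sq_sqrt (by positivity)]
    exact Finset.sum_congr rfl fun i _ => by rw [Real.norm_eq_abs, sq_abs]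
  -- upper bound for the numerator
  have hNum : μd.toSphere S ≤ (m + 1 : ℕ) *
      (ENNReal.ofReal (2 * ε) * Bm) := by
    rw [μd.toSphere_apply' hSmeas, finrank_euclideanSpace_fin]
    refine mul_le_mul_right ?_ _
    rw [← slab_volume m ε 1 one_pos]
    refine measure_mono ?_
    rintro z hz
    rw [Set.mem_smul] at hz
    obtain ⟨r, hr, y, hy, rfl⟩ := hz
    obtain ⟨v, hv, rfl⟩ := hy
    have hvnorm : ‖(v : EuclideanSpace ℝ (Fin (m + 1)))‖ = 1 :=
      mem_sphere_zero_iff_norm.1 v.2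
    have hr0 : 0 < r := hr.1
    have hr1 : r < 1 := hr.2
    constructor
    · have : (r • (v : EuclideanSpace ℝ (Fin (m + 1)))) 0
          = r * (v : EuclideanSpace ℝ (Fin (m + 1))) 0 := rfl
      rw [this, abs_mul, abs_of_pos hr0]
      calc r * |(v : EuclideanSpace ℝ (Fin (m + 1))) 0|
          ≤ 1 * |(v : EuclideanSpace ℝ (Fin (m + 1))) 0| := by
            exact mul_le_mul_of_nonneg_right hr1.le (abs_nonneg _)
        _ < ε := by rw [one_mul]; exact hv
    · have hnz : ‖r • (v : EuclideanSpace ℝ (Fin (m + 1)))‖ = r := by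
        rw [norm_smul, hvnorm, mul_one, Real.norm_eq_abs, abs_of_pos hr0]
      have hsum := hnormsq (r • (v : EuclideanSpace ℝ (Fin (m + 1))))
      rw [hnz] at hsum
      have hle : ∑ j : Fin m, ((r • (v : EuclideanSpace ℝ (Fin (m + 1)))) j.succ) ^ 2
          ≤ ∑ i : Fin (m + 1), ((r • (v : EuclideanSpace ℝ (Fin (m + 1)))) i) ^ 2 := by
        rw [Fin.sum_univ_succ]
        nlinarith [sq_nonneg ((r • (v : EuclideanSpace ℝ (Fin (m + 1)))) 0)]
      calc ∑ j : Fin m, ((r • (v : EuclideanSpace ℝ (Fin (m + 1)))) j.succ) ^ 2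
          ≤ r ^ 2 := by rw [← hsum]; exact hle
        _ < 1 ^ 2 := by nlinarith
  -- lower bound for the denominator
  have hDen : ((m + 1 : ℕ) : ℝ≥0∞) * (ENNReal.ofReal (2 * a) * (ENNReal.ofReal (c ^ m) * Bm))
      ≤ μd.toSphere Set.univ := by
    rw [Measure.toSphere_apply_univ, finrank_euclideanSpace_fin]
    refine mul_le_mul_right ?_ _
    have hball : (volume : Measure (EuclideanSpace ℝ (Fin m))) (Metric.ball 0 c)
        = ENNReal.ofReal (c ^ m) * Bm := by
      rw [Measure.addHaar_ball_of_pos _ _ hc0, finrank_euclideanSpace_fin, hBm]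
    rw [← hball, ← slab_volume m a c hc0]
    refine measure_mono ?_
    rintro x ⟨h1, h2⟩
    rw [Metric.mem_ball, dist_zero_right]
    have hsum := hnormsq x
    have hx0 : (x 0) ^ 2 < ε := by
      have : (x 0) ^ 2 = |x 0| ^ 2 := (sq_abs _).symm
      rw [this]
      calc |x 0| ^ 2 < a ^ 2 := by nlinarith [abs_nonneg (x 0)]
        _ = ε := Real.sq_sqrt hε.le
    have hcsq : c ^ 2 = 1 - ε := Real.sq_sqrt h1ε.le
    have hlt : ‖x‖ ^ 2 < 1 := by
      rw [← hsum, Fin.sum_univ_succ]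
      nlinarith
    nlinarith [norm_nonneg x]
  -- combine
  have hstep : (μd.toSphere Set.univ)⁻¹ * μd.toSphere S
      ≤ (((m + 1 : ℕ) : ℝ≥0∞) * (ENNReal.ofReal (2 * a * c ^ m) * Bm))⁻¹ *
        (((m + 1 : ℕ) : ℝ≥0∞) * (ENNReal.ofReal (2 * ε) * Bm)) := by
    refine mul_le_mul' (ENNReal.inv_le_inv.2 ?_) hNum
    rw [ENNReal.ofReal_mul (by positivity), mul_assoc]
    exact hDen
  refine hstep.trans ?_
  refine ennreal_aux _ _ (by simp) (by simp) hBm0 hBmt (by positivity) (by positivity) ?_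
  -- real inequality : 2ε ≤ (√ε + dε) * (2a * c^m)
  have key := real_ineq (m + 1) m rfl ε hε (by push_cast at hcase ⊢; linarith)
  have haa : a * a = ε := Real.mul_self_sqrt hε.le
  push_cast at key ⊢
  nlinarith [mul_le_mul_of_nonneg_left key ha0.le, pow_nonneg hc0.le m]
end

section
/- Let θ₁ > θ₂ > θ₃ > θ₄ be four distinct angles, each strictly between 0 and π, satisfying θ₄ > 2π/3 and θ₂ + θ₃ > π + θ₄. Then no set of four points in ℝ³ realises all four angles θ₁, θ₂, θ₃, θ₄ (and hence, since any four points lie in a 3-dimensional affine subspace, no set of four points in any dimension does). -/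
open EuclideanGeometry

/-!
All four angles exceed `2π/3`, so each is the unique obtuse angle of the triangle it lives in,
and being distinct they live in the four different triangles of the four points. Let `a b` be a
longest segment. The angles of the triangles `a b c` and `a b d` at `a` and `b` are acute, so
those two obtuse angles sit at `c` and `d`. The obtuse angle of `a c d` is not at `a`, since
`∠ c a d ≤ ∠ c a b + ∠ b a d < π/3 + π/3`, and likewise that of `b c d` is not at `b`. The three
angles between three rays from a point sum to at most `2π`, so these two are not both at `c`, nor
both at `d`. Up to swapping `c` and `d`, the four angles are therefore `∠ a c b`, `∠ a d b`,
`∠ a c d` and `∠ b d c`. The triangle inequality for angles at `c` and `d`, with the angle sums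
of `b c d` and `a c d`, bounds each of them from below by the sum of two of the others minus `π`;
for the smallest one, `θ₄`, this contradicts `π + θ₄ < θ₂ + θ₃`.
-/

open EuclideanGeometry Real

namespace InnerProductGeometry

variable {V : Type*} [NormedAddCommGroup V] [InnerProductSpace ℝ V]

theorem angle_add_angle_add_angle_le_two_pi (x y z : V) :
    angle x y + angle y z + angle x z ≤ 2 * π := by
  have h := angle_le_angle_add_angle x (-y) z
  rw [angle_neg_right, angle_neg_left] at h
  linarith

end InnerProductGeometry

namespace EuclideanGeometry

variable {V Pt : Type*} [NormedAddCommGroup V] [InnerProductSpace ℝ V] [MetricSpace Pt]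
  [NormedAddTorsor V Pt]

theorem angle_add_angle_add_angle_le_two_pi (p p₁ p₂ p₃ : Pt) :
    ∠ p₁ p p₂ + ∠ p₂ p p₃ + ∠ p₁ p p₃ ≤ 2 * π :=
  InnerProductGeometry.angle_add_angle_add_angle_le_two_pi _ _ _

theorem angle_add_angle_le_pi {p₁ p₂ : Pt} (p₃ : Pt) (h : p₂ ≠ p₁) :
    ∠ p₁ p₂ p₃ + ∠ p₂ p₃ p₁ ≤ π := by
  linarith [angle_add_angle_add_angle_eq_pi p₃ h, angle_nonneg p₃ p₁ p₂]

theorem angle_lt_pi_div_two_of_dist_le {p₁ p₂ p₃ : Pt} (h : p₃ ≠ p₂)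
    (hle : dist p₁ p₃ ≤ dist p₁ p₂) : ∠ p₁ p₂ p₃ < π / 2 := by
  by_contra! hangle
  have hcos : cos (∠ p₁ p₂ p₃) ≤ 0 :=
    cos_nonpos_of_pi_div_two_le_of_le hangle (by linarith [angle_le_pi p₁ p₂ p₃, pi_pos])
  have h₃₂ : 0 < dist p₃ p₂ := dist_pos.2 h
  have hcross : 0 ≤ dist p₁ p₂ * dist p₃ p₂ * -cos (∠ p₁ p₂ p₃) := by
    have := dist_nonneg (x := p₁) (y := p₂)
    have := neg_nonneg.2 hcos
    positivity
  nlinarith [law_cos p₁ p₂ p₃, mul_self_le_mul_self dist_nonneg hle]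

end EuclideanGeometry

theorem Finite.exists_perm_forall_of_subsingleton {ι : Type*} [Finite ι] (K : ι → ι → Prop)
    (hcover : ∀ i, ∃ k, K k i) (hsub : ∀ k, {i | K k i}.Subsingleton) :
    ∃ σ : Equiv.Perm ι, ∀ k, K k (σ k) := by
  choose f hf using hcover
  have hf_inj : f.Injective := fun i j hij => hsub (f i) (hf i) (hij ▸ hf j)
  let e := Equiv.ofBijective f (Finite.injective_iff_bijective.1 hf_inj)
  refine ⟨e.symm, fun k => ?_⟩
  convert hf (e.symm k)
  exact (e.apply_symm_apply k).symm

section FourPoints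

variable {V Pt : Type*} [NormedAddCommGroup V] [InnerProductSpace ℝ V] [MetricSpace Pt]
  [NormedAddTorsor V Pt]

def triangleAngles (p q r : Pt) : Set ℝ := {∠ q p r, ∠ p q r, ∠ p r q}

theorem eq_of_mem_triangleAngles {p q r : Pt} {x y : ℝ} (h : q ≠ p)
    (hx : x ∈ triangleAngles p q r) (hy : y ∈ triangleAngles p q r)
    (hx' : π / 2 < x) (hy' : π / 2 < y) : x = y := by
  have hsum := angle_add_angle_add_angle_eq_pi r h
  have := angle_comm q p r
  have := angle_comm p r q
  have := angle_nonneg q p r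
  have := angle_nonneg p q r
  have := angle_nonneg p r q
  simp only [triangleAngles, Set.mem_insert_iff, Set.mem_singleton_iff] at hx hy
  rcases hx with rfl | rfl | rfl <;> rcases hy with rfl | rfl | rfl <;> first | rfl | linarith

def fourTriangles (a b c d : Pt) : Fin 4 → Set ℝ :=
  ![triangleAngles a b c, triangleAngles a b d, triangleAngles a c d, triangleAngles b c d]

variable {a b c d : Pt}

theorem exists_mem_fourTriangles [DecidableEq Pt] {A B C : Pt}
    (hA : A ∈ ({a, b, c, d} : Finset Pt)) (hB : B ∈ ({a, b, c, d} : Finset Pt)) (hC : C ∈ ({a, b, c, d} : Finset Pt))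
    (hAB : A ≠ B) (hCB : C ≠ B) (hAC : A ≠ C) :
    ∃ k, ∠ A B C ∈ fourTriangles a b c d k := by
  simp only [Finset.mem_insert, Finset.mem_singleton] at hA hB hC
  rcases hA with rfl | rfl | rfl | rfl <;> rcases hB with rfl | rfl | rfl | rfl <;>
    rcases hC with rfl | rfl | rfl | rfl <;>
    simp_all [Fin.exists_fin_succ, fourTriangles, triangleAngles, angle_comm]

theorem eq_of_mem_fourTriangles (hba : b ≠ a) (hca : c ≠ a) (hcb : c ≠ b) (k : Fin 4)
    {x y : ℝ} (hx : x ∈ fourTriangles a b c d k) (hy : y ∈ fourTriangles a b c d k)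
    (hx' : π / 2 < x) (hy' : π / 2 < y) : x = y := by
  fin_cases k
  exacts [eq_of_mem_triangleAngles hba hx hy hx' hy', eq_of_mem_triangleAngles hba hx hy hx' hy',
    eq_of_mem_triangleAngles hca hx hy hx' hy', eq_of_mem_triangleAngles hcb hx hy hx' hy']

theorem eq_angles_of_mem_fourTriangles (hab : a ≠ b) (hbac : ∠ b a c < π / 2)
    (hbad : ∠ b a d < π / 2) (habc : ∠ a b c < π / 2) (habd : ∠ a b d < π / 2)
    {x : Fin 4 → ℝ} (hx : ∀ k, x k ∈ fourTriangles a b c d k) (hbig : ∀ k, 2 * π / 3 < x k) :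
    x 0 = ∠ a c b ∧ x 1 = ∠ a d b ∧
      (x 2 = ∠ a c d ∧ x 3 = ∠ b d c ∨ x 2 = ∠ a d c ∧ x 3 = ∠ b c d) := by
  have hπ := pi_pos
  have h₀ : x 0 ∈ triangleAngles a b c := hx 0
  have h₁ : x 1 ∈ triangleAngles a b d := hx 1
  have h₂ : x 2 ∈ triangleAngles a c d := hx 2
  have h₃ : x 3 ∈ triangleAngles b c d := hx 3
  simp only [triangleAngles, Set.mem_insert_iff, Set.mem_singleton_iff] at h₀ h₁ h₂ h₃
  have hx₀ : x 0 = ∠ a c b := by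
    rcases h₀ with h | h | h <;> [linarith [hbig 0]; linarith [hbig 0]; exact h]
  have hx₁ : x 1 = ∠ a d b := by
    rcases h₁ with h | h | h <;> [linarith [hbig 1]; linarith [hbig 1]; exact h]
  have hcab : ∠ b a c + ∠ a c b ≤ π := angle_add_angle_le_pi c hab
  have hdab : ∠ b a d + ∠ a d b ≤ π := angle_add_angle_le_pi d hab
  have hcba : ∠ a b c + ∠ b c a ≤ π := angle_add_angle_le_pi c hab.symm
  have hdba : ∠ a b d + ∠ b d a ≤ π := angle_add_angle_le_pi d hab.symm
  have hcad : ∠ c a d < 2 * π / 3 := by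
    linarith [angle_le_angle_add_angle a c b d, angle_comm c a b, hbig 0, hbig 1]
  have hcbd : ∠ c b d < 2 * π / 3 := by
    linarith [angle_le_angle_add_angle b c a d, angle_comm c b a, angle_comm b c a,
      angle_comm b d a, hbig 0, hbig 1]
  have hc := angle_add_angle_add_angle_le_two_pi c a b d
  have hd := angle_add_angle_add_angle_le_two_pi d a b c
  refine ⟨hx₀, hx₁, ?_⟩
  rcases h₂ with h₂ | h₂ | h₂ <;> rcases h₃ with h₃ | h₃ | h₃
  all_goals first
    | linarith [hbig 2, hbig 3]
    | exact Or.inl ⟨h₂, h₃⟩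
    | exact Or.inr ⟨h₂, h₃⟩
    | linarith [hbig 0, hbig 1, hbig 2, hbig 3]

theorem angle_add_angle_le_angle_add_pi {a b c d : Pt} (hcb : c ≠ b) :
    ∠ a c b + ∠ b d c ≤ ∠ a c d + π ∧ ∠ a c d + ∠ b d c ≤ ∠ a c b + π := by
  have h := angle_add_angle_le_pi d hcb
  rw [angle_comm c d b] at h
  constructor
  · linarith [angle_le_angle_add_angle c a d b, angle_comm d c b]
  · linarith [angle_le_angle_add_angle c a b d]

theorem false_of_angle_config {θ : Fin 4 → ℝ}
    (hsum : ∀ i j, i ≠ j → i ≠ 3 → j ≠ 3 → π + θ 3 < θ i + θ j)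
    {a b c d : Pt} (hcb : c ≠ b) (hda : d ≠ a) {i j k l : Fin 4}
    (hij : i ≠ j) (hik : i ≠ k) (hil : i ≠ l) (hjk : j ≠ k) (hjl : j ≠ l) (hkl : k ≠ l)
    (hi : ∠ a c b = θ i) (hj : ∠ a d b = θ j) (hk : ∠ a c d = θ k) (hl : ∠ b d c = θ l) :
    False := by
  obtain ⟨h₁, h₂⟩ := angle_add_angle_le_angle_add_pi (a := a) (d := d) hcb
  obtain ⟨h₃, h₄⟩ := angle_add_angle_le_angle_add_pi (a := b) (d := c) hda
  rw [angle_comm b d a] at h₃ h₄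
  rw [hi, hj, hk, hl] at *
  rcases (by omega : i = 3 ∨ j = 3 ∨ k = 3 ∨ l = 3) with rfl | rfl | rfl | rfl
  · linarith [hsum k l hkl hik.symm hil.symm]
  · linarith [hsum k l hkl hjk.symm hjl.symm]
  · linarith [hsum i l hil hik hkl.symm]
  · linarith [hsum j k hjk hjl hkl]

theorem Finset.exists_diameter_of_card_eq_four [DecidableEq Pt] {P : Finset Pt}
    (hP : P.card = 4) :
    ∃ a b c d, P = {a, b, c, d} ∧ a ≠ b ∧ c ≠ a ∧ c ≠ b ∧ d ≠ a ∧ d ≠ b ∧ c ≠ d ∧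
      ∀ x ∈ P, ∀ y ∈ P, dist x y ≤ dist a b := by
  have hne : (P ×ˢ P).Nonempty := by
    simpa using Finset.card_pos.1 (by omega : 0 < P.card)
  obtain ⟨⟨a, b⟩, hab, hmax⟩ := (P ×ˢ P).exists_max_image (fun q => dist q.1 q.2) hne
  rw [Finset.mem_product] at hab
  have hdiam : ∀ x ∈ P, ∀ y ∈ P, dist x y ≤ dist a b :=
    fun x hx y hy => hmax (x, y) (Finset.mem_product.2 ⟨hx, hy⟩)
  have hab' : a ≠ b := by
    obtain ⟨x, hx, y, hy, hxy⟩ := Finset.one_lt_card.1 (by omega : 1 < P.card)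
    rintro rfl
    linarith [hdiam x hx y hy, dist_pos.2 hxy, dist_self a]
  have hcard : ((P.erase a).erase b).card = 2 := by
    rw [Finset.card_erase_of_mem (Finset.mem_erase.2 ⟨hab'.symm, hab.2⟩),
      Finset.card_erase_of_mem hab.1, hP]
  obtain ⟨c, d, hcd, hPcd⟩ := Finset.card_eq_two.1 hcard
  have hc : c ∈ (P.erase a).erase b := by simp [hPcd]
  have hd : d ∈ (P.erase a).erase b := by simp [hPcd]
  simp only [Finset.mem_erase] at hc hd
  refine ⟨a, b, c, d, ?_, hab', hc.2.1, hc.1, hd.2.1, hd.1, hcd, hdiam⟩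
  rw [← hPcd, Finset.insert_erase (Finset.mem_erase.2 ⟨hab'.symm, hab.2⟩),
    Finset.insert_erase hab.1]

theorem false_of_realises_fin_four {P : Finset Pt} (hP : P.card = 4) {θ : Fin 4 → ℝ}
    (hθ : θ.Injective) (hbig : ∀ i, 2 * π / 3 < θ i)
    (hsum : ∀ i j, i ≠ j → i ≠ 3 → j ≠ 3 → π + θ 3 < θ i + θ j)
    (hreal : ∀ i, ∃ A B C, A ∈ P ∧ B ∈ P ∧ C ∈ P ∧ A ≠ B ∧ C ≠ B ∧ ∠ A B C = θ i) :
    False := by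
  classical
  have hπ := pi_pos
  obtain ⟨a, b, c, d, rfl, hab, hca, hcb, hda, hdb, -, hdiam⟩ :=
    Finset.exists_diameter_of_card_eq_four hP
  have hcover : ∀ i, ∃ k, θ i ∈ fourTriangles a b c d k := by
    intro i
    obtain ⟨A, B, C, hA, hB, hC, hAB, hCB, hθi⟩ := hreal i
    have hAC : A ≠ C := by
      rintro rfl
      linarith [hbig i, angle_self_of_ne hAB]
    exact hθi ▸ exists_mem_fourTriangles hA hB hC hAB hCB hAC
  obtain ⟨σ, hσ⟩ := Finite.exists_perm_forall_of_subsingleton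
    (fun k i => θ i ∈ fourTriangles a b c d k) hcover fun k i hi j hj =>
      hθ (eq_of_mem_fourTriangles hab.symm hca hcb k hi hj (by linarith [hbig i])
        (by linarith [hbig j]))
  have hfar_b : ∀ t ∈ ({a, b, c, d} : Finset Pt), dist b t ≤ dist b a := fun t ht =>
    dist_comm a b ▸ hdiam b (by simp) t ht
  have hfar_a : ∀ t ∈ ({a, b, c, d} : Finset Pt), dist a t ≤ dist a b := hdiam a (by simp)
  obtain ⟨h₀, h₁, h₂₃⟩ := eq_angles_of_mem_fourTriangles (x := θ ∘ σ) hab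
    (angle_lt_pi_div_two_of_dist_le hca (hfar_b c (by simp)))
    (angle_lt_pi_div_two_of_dist_le hda (hfar_b d (by simp)))
    (angle_lt_pi_div_two_of_dist_le hcb (hfar_a c (by simp)))
    (angle_lt_pi_div_two_of_dist_le hdb (hfar_a d (by simp))) hσ fun k => hbig (σ k)
  rcases h₂₃ with ⟨h₂, h₃⟩ | ⟨h₂, h₃⟩
  · refine false_of_angle_config hsum hcb hda ?_ ?_ ?_ ?_ ?_ ?_ h₀.symm h₁.symm h₂.symm h₃.symm
      <;> exact σ.injective.ne (by decide)
  · refine false_of_angle_config hsum hdb hca ?_ ?_ ?_ ?_ ?_ ?_ h₁.symm h₀.symm h₂.symm h₃.symm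
      <;> exact σ.injective.ne (by decide)

end FourPoints

theorem not_exists_card_eq_four_realises {θ₁ θ₂ θ₃ θ₄ : ℝ} (h12 : θ₂ < θ₁) (h23 : θ₃ < θ₂)
    (h34 : θ₄ < θ₃) (hbig : 2 * π / 3 < θ₄) (hsum : π + θ₄ < θ₂ + θ₃) (d : ℕ) :
    ¬ ∃ P : Finset (EuclideanSpace ℝ (Fin d)), P.card = 4 ∧
      Realises (P : Set (EuclideanSpace ℝ (Fin d))) θ₁ ∧
      Realises (P : Set (EuclideanSpace ℝ (Fin d))) θ₂ ∧
      Realises (P : Set (EuclideanSpace ℝ (Fin d))) θ₃ ∧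
      Realises (P : Set (EuclideanSpace ℝ (Fin d))) θ₄ := by
  rintro ⟨P, hP, r₁, r₂, r₃, r₄⟩
  refine false_of_realises_fin_four hP (θ := ![θ₁, θ₂, θ₃, θ₄]) ?_ ?_ ?_ ?_
  · intro i j h
    fin_cases i <;> fin_cases j <;> simp at h ⊢ <;> linarith
  · intro i
    fin_cases i <;> simp <;> linarith
  · intro i j hij hi hj
    fin_cases i <;> fin_cases j <;> simp at hij hi hj ⊢ <;> linarith
  · intro i
    fin_cases i
    exacts [r₁, r₂, r₃, r₄]

theorem statement19_general (θ₁ θ₂ θ₃ θ₄ : ℝ)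
    (h12 : θ₂ < θ₁) (h23 : θ₃ < θ₂) (h34 : θ₄ < θ₃)
    (hbig : 2 * Real.pi / 3 < θ₄) (hsum : Real.pi + θ₄ < θ₂ + θ₃) :
    (¬ ∃ P : Finset (EuclideanSpace ℝ (Fin 3)), P.card = 4 ∧
      Realises (P : Set (EuclideanSpace ℝ (Fin 3))) θ₁ ∧
      Realises (P : Set (EuclideanSpace ℝ (Fin 3))) θ₂ ∧
      Realises (P : Set (EuclideanSpace ℝ (Fin 3))) θ₃ ∧
      Realises (P : Set (EuclideanSpace ℝ (Fin 3))) θ₄) ∧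
    ∀ d : ℕ, ¬ ∃ P : Finset (EuclideanSpace ℝ (Fin d)), P.card = 4 ∧
      Realises (P : Set (EuclideanSpace ℝ (Fin d))) θ₁ ∧
      Realises (P : Set (EuclideanSpace ℝ (Fin d))) θ₂ ∧
      Realises (P : Set (EuclideanSpace ℝ (Fin d))) θ₃ ∧
      Realises (P : Set (EuclideanSpace ℝ (Fin d))) θ₄ := by
  exact ⟨not_exists_card_eq_four_realises h12 h23 h34 hbig hsum 3,
    not_exists_card_eq_four_realises h12 h23 h34 hbig hsum⟩

/-- if `θ₁ > θ₂ > θ₃ > θ₄` are angles in `(0, π)` with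
`θ₄ > 2π/3` and `θ₂ + θ₃ > π + θ₄`, then no four points in `ℝ³` (hence no four
points in any dimension) realise all four angles. -/
theorem statement19 (θ₁ θ₂ θ₃ θ₄ : ℝ)
    (h12 : θ₂ < θ₁) (h23 : θ₃ < θ₂) (h34 : θ₄ < θ₃)
    (h1 : θ₁ ∈ Set.Ioo 0 Real.pi) (h2 : θ₂ ∈ Set.Ioo 0 Real.pi)
    (h3 : θ₃ ∈ Set.Ioo 0 Real.pi) (h4 : θ₄ ∈ Set.Ioo 0 Real.pi)
    (hbig : 2 * Real.pi / 3 < θ₄) (hsum : Real.pi + θ₄ < θ₂ + θ₃) :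
    (¬ ∃ P : Finset (EuclideanSpace ℝ (Fin 3)), P.card = 4 ∧
      Realises (P : Set (EuclideanSpace ℝ (Fin 3))) θ₁ ∧
      Realises (P : Set (EuclideanSpace ℝ (Fin 3))) θ₂ ∧
      Realises (P : Set (EuclideanSpace ℝ (Fin 3))) θ₃ ∧
      Realises (P : Set (EuclideanSpace ℝ (Fin 3))) θ₄) ∧
    ∀ d : ℕ, ¬ ∃ P : Finset (EuclideanSpace ℝ (Fin d)), P.card = 4 ∧
      Realises (P : Set (EuclideanSpace ℝ (Fin d))) θ₁ ∧
      Realises (P : Set (EuclideanSpace ℝ (Fin d))) θ₂ ∧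
      Realises (P : Set (EuclideanSpace ℝ (Fin d))) θ₃ ∧
      Realises (P : Set (EuclideanSpace ℝ (Fin d))) θ₄ :=
  statement19_general θ₁ θ₂ θ₃ θ₄ h12 h23 h34 hbig hsum
end
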